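/- arXiv:2409.17037 — 2 statements merged into one kernel-verified Lean document; each statement's English description precedes it below -/
import Mathlib

section
/- Particular solutions with monomial right-hand side, Dirichlet case. Let i, j, k ∈ ℕ₀ with i + j = k. Set Σ^D_{k+2} := {n ∈ {2, …, k+2} : nω/π ∈ ℕ} and S^D_{k+2} := span{ r^n (ln r · sin(nφ) + φ cos(nφ)) : n ∈ Σ^D_{k+2} }. Then there exist a polynomial p̃_{i,j} of degree k+2 and a harmonic function p'_{i,j} ∈ S^D_{k+2} such that p^D_{i,j} := p̃_{i,j} + p'_{i,j} satisfies −Δ p^D_{i,j} = x^i y^j on C and p^D_{i,j} = 0 on both lateral sides of C (i.e., on the rays φ = 0 and φ = ω). In the special case ω = π, the contribution p'_{i,j} may be taken to be zero. -/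
noncomputable section

open MeasureTheory Real ENNReal Set
open scoped Classical NNReal

/-- The plane `ℝ²` as a Euclidean space. -/
abbrev V2 : Type := EuclideanSpace ℝ (Fin 2)

/-- "Plain" distributions: functionals on complex-valued test functions. -/
abbrev TD : Type := (V2 → ℂ) → ℂ

/-- The point with polar coordinates `(r, θ)`. -/
def polarPt (r θ : ℝ) : V2 := (WithLp.equiv 2 (Fin 2 → ℝ)).symm ![r * Real.cos θ, r * Real.sin θ]

/-- The infinite cone of opening angle `ω`. -/
def coneSet (ω : ℝ) : Set V2 := {x | ∃ r θ : ℝ, 0 < r ∧ 0 < θ ∧ θ < ω ∧ x = polarPt r θ}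

/-- The truncated cone `C_R`. -/
def coneT (ω R : ℝ) : Set V2 := coneSet ω ∩ Metric.ball 0 R

/-- The full lateral ray at angle `θ`. -/
def rayFull (θ : ℝ) : Set V2 := {x | ∃ r : ℝ, 0 < r ∧ x = polarPt r θ}

/-- The truncated lateral ray at angle `θ`. -/
def rayT (θ R : ℝ) : Set V2 := {x | ∃ r : ℝ, 0 < r ∧ r < R ∧ x = polarPt r θ}

/-- The circular arc part of the boundary of `C_R`. -/
def arcT (ω R : ℝ) : Set V2 := {x | ∃ θ : ℝ, 0 < θ ∧ θ < ω ∧ x = polarPt R θ}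

/-- The polar angle of a point, normalized to `[0, 2π)`. -/
def polarAngle (x : V2) : ℝ :=
  if Complex.arg (x 0 + x 1 * Complex.I) < 0 then Complex.arg (x 0 + x 1 * Complex.I) + 2 * π
  else Complex.arg (x 0 + x 1 * Complex.I)

/-- Smooth compactly supported real test function with support in `D`. -/
def IsTestR (D : Set V2) (φ : V2 → ℝ) : Prop :=
  ContDiff ℝ (⊤ : ℕ∞) φ ∧ HasCompactSupport φ ∧ tsupport φ ⊆ D

/-- The distribution associated with a real-valued function. -/
def toDistR (f : V2 → ℝ) : TD := fun φ => ∫ x, (f x : ℂ) * φ x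

/-- `g` represents the Fourier transform of the distribution `u`. -/
def IsFourierRep (u : TD) (g : V2 → ℂ) : Prop :=
  AEStronglyMeasurable g volume ∧
  ∀ φ : V2 → ℂ, ContDiff ℝ (⊤ : ℕ∞) φ → HasCompactSupport φ →
    u (FourierTransform.fourier φ) = ∫ x, g x * φ x

/-- The `H^s(ℝ²)` norm of a distribution (`∞` if not in `H^s`). -/
def HsNormGlobal (s : ℝ) (u : TD) : ℝ≥0∞ :=
  ⨅ g ∈ {g : V2 → ℂ | IsFourierRep u g},
    (∫⁻ ξ, ENNReal.ofReal ((1 + ‖ξ‖ ^ 2) ^ s) * (‖g ξ‖₊ : ℝ≥0∞) ^ 2) ^ (1/2 : ℝ)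

/-- `U` coincides with `u` on test functions supported in `D`. -/
def restrictsTo (D : Set V2) (U u : TD) : Prop :=
  ∀ φ : V2 → ℂ, ContDiff ℝ (⊤ : ℕ∞) φ → HasCompactSupport φ → tsupport φ ⊆ D → U φ = u φ

/-- The `H^s(D)` (restriction/quotient) norm. -/
def HsNormOn (s : ℝ) (D : Set V2) (u : TD) : ℝ≥0∞ :=
  ⨅ U ∈ {U : TD | restrictsTo D U u}, HsNormGlobal s U

/-- The (distributional) support of `u` is contained in `S` (for `S` closed). -/
def DistSuppIn (u : TD) (S : Set V2) : Prop :=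
  ∀ φ : V2 → ℂ, ContDiff ℝ (⊤ : ℕ∞) φ → HasCompactSupport φ → tsupport φ ⊆ Sᶜ → u φ = 0

/-- The `H̃^s(D)` norm: global `H^s` norm for distributions supported in `closure D`. -/
def HsNormSupp (s : ℝ) (D : Set V2) (u : TD) : ℝ≥0∞ :=
  if DistSuppIn u (closure D) then HsNormGlobal s u else ⊤

/-- K-functional for a pair of extended-real-valued norms. -/
def Kfun {β : Type} [AddCommGroup β] (N0 N1 : β → ℝ≥0∞) (t : ℝ) (u : β) : ℝ≥0∞ :=
  ⨅ v : β, (N0 (u - v) + ENNReal.ofReal t * N1 v)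

/-- Real interpolation (K-method) norm with parameters `θ, q`. -/
def interpNorm {β : Type} [AddCommGroup β] (N0 N1 : β → ℝ≥0∞) (θ : ℝ) (q : ℝ≥0∞) (u : β) : ℝ≥0∞ :=
  if q = ⊤ then ⨆ t ∈ Set.Ioi (0:ℝ), ENNReal.ofReal (t ^ (-θ)) * Kfun N0 N1 t u
  else (∫⁻ t in Set.Ioi (0:ℝ),
      ENNReal.ofReal t⁻¹ * (ENNReal.ofReal (t ^ (-θ)) * Kfun N0 N1 t u) ^ q.toReal) ^ q.toReal⁻¹

/-- The Besov `B^s_{2,q}(D)` norm, realized as `(H^{s-1}(D), H^{s+1}(D))_{1/2,q}`. -/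
def besovNorm (s : ℝ) (q : ℝ≥0∞) (D : Set V2) (u : TD) : ℝ≥0∞ :=
  interpNorm (HsNormOn (s-1) D) (HsNormOn (s+1) D) (1/2) q u

/-- The Besov `B̃^s_{2,q}(D)` norm, realized as `(H̃^{s-1}(D), H̃^{s+1}(D))_{1/2,q}`. -/
def besovNormSupp (s : ℝ) (q : ℝ≥0∞) (D : Set V2) (u : TD) : ℝ≥0∞ :=
  interpNorm (HsNormSupp (s-1) D) (HsNormSupp (s+1) D) (1/2) q u

/-- `i`-th classical partial derivative. -/
def pdR (i : Fin 2) (f : V2 → ℝ) : V2 → ℝ := fun x => fderiv ℝ f x (EuclideanSpace.single i 1)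

/-- `g` is the weak gradient of `u` on `D`. -/
def WeakGradOn (D : Set V2) (u : V2 → ℝ) (g : V2 → V2) : Prop :=
  ∀ φ : V2 → ℝ, IsTestR D φ → ∀ i : Fin 2,
    ∫ x, u x * pdR i φ x = - ∫ x, g x i * φ x

/-- Smooth compactly supported test function whose support avoids the set `B`. -/
def testAway (B : Set V2) (v : V2 → ℝ) : Prop :=
  ContDiff ℝ (⊤ : ℕ∞) v ∧ HasCompactSupport v ∧ tsupport v ∩ B = ∅

/-- Weak formulation `∫_D ∇u·∇v = ⟨f,v⟩` for all test functions `v` avoiding `B`,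
with `f` a distribution and `g` the (weak) gradient of `u`. -/
def solvesWeakD (D B : Set V2) (g : V2 → V2) (f : TD) : Prop :=
  ∀ v : V2 → ℝ, testAway B v →
    ((∫ x in D, ∑ i : Fin 2, g x i * pdR i v x : ℝ) : ℂ) = f (fun x => (v x : ℂ))

/-- Weak formulation `∫_D ∇u·∇v = ∫_D f v` for all test functions `v` avoiding `B`. -/
def solvesWeakF (D B : Set V2) (g : V2 → V2) (f : V2 → ℝ) : Prop :=
  ∀ v : V2 → ℝ, testAway B v →
    ∫ x in D, ∑ i : Fin 2, g x i * pdR i v x = ∫ x in D, f x * v x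

/-- `u` has zero trace on `Γ` (as part of `∂D`): `u` is an `H^1(D)`-limit of
smooth functions vanishing near `Γ`. -/
def TraceZeroOn (D Γ : Set V2) (u : V2 → ℝ) : Prop :=
  ∀ δ : ℝ, 0 < δ → ∃ w : V2 → ℝ, ContDiff ℝ (⊤ : ℕ∞) w ∧
    (∃ U : Set V2, IsOpen U ∧ Γ ⊆ U ∧ ∀ x ∈ U, w x = 0) ∧
    HsNormOn 1 D (toDistR fun x => u x - w x) < ENNReal.ofReal δ

/-- `f ∈ H_D^{-1}(D)`: bounded w.r.t. the `H^1(D)` norm on the test class avoiding `B`. -/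
def memDualH1 (D B : Set V2) (f : TD) : Prop :=
  ∃ c : ℝ, ∀ v : V2 → ℝ, testAway B v →
    ‖f (fun x => (v x : ℂ))‖ ≤ c * (HsNormOn 1 D (toDistR v)).toReal

/-- Multiplication of a distribution by a smooth function. -/
def smulDist (χ : V2 → ℝ) (f : TD) : TD := fun φ => f (fun x => (χ x : ℂ) * φ x)

/-- Singularity function `r^λ sin(λφ)`. -/
def singSin (lam : ℝ) (x : V2) : ℝ := ‖x‖ ^ lam * Real.sin (lam * polarAngle x)

/-- Singularity function `r^λ cos(λφ)`. -/
def singCos (lam : ℝ) (x : V2) : ℝ := ‖x‖ ^ lam * Real.cos (lam * polarAngle x)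

/-- The stress intensity integral `∫_C r^{-λ} sin(λφ) f`. -/
def coefSin (ω lam : ℝ) (f : V2 → ℝ) : ℝ :=
  ∫ x in coneSet ω, ‖x‖ ^ (-lam) * Real.sin (lam * polarAngle x) * f x

/-- The stress intensity integral `∫_C r^{-λ} cos(λφ) f`. -/
def coefCos (ω lam : ℝ) (f : V2 → ℝ) : ℝ :=
  ∫ x in coneSet ω, ‖x‖ ^ (-lam) * Real.cos (lam * polarAngle x) * f x

/-- Pointwise (classical) Laplacian. -/
def lapl (f : V2 → ℝ) : V2 → ℝ := fun x => pdR 0 (pdR 0 f) x + pdR 1 (pdR 1 f) x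

/-- `f` is (the function of) a polynomial of degree at most `m` on `ℝ²`. -/
def IsPolyDeg (m : ℕ) (f : V2 → ℝ) : Prop :=
  ∃ q : MvPolynomial (Fin 2) ℝ, q.totalDegree ≤ m ∧ ∀ x : V2, f x = MvPolynomial.eval (fun i => x i) q

/-- The function `r^n (ln r · sin(nφ) + φ cos(nφ)) = Im(z^n log z)`. -/
def singLogSin (n : ℕ) (x : V2) : ℝ :=
  ‖x‖ ^ (n:ℝ) * (Real.log ‖x‖ * Real.sin (n * polarAngle x) + polarAngle x * Real.cos (n * polarAngle x))

/-- The function `r^n (ln r · cos(nφ) − φ sin(nφ)) = Re(z^n log z)`. -/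
def singLogCos (n : ℕ) (x : V2) : ℝ :=
  ‖x‖ ^ (n:ℝ) * (Real.log ‖x‖ * Real.cos (n * polarAngle x) - polarAngle x * Real.sin (n * polarAngle x))

/-- `Σ^D_m = {n ∈ {2,…,m} : nω/π ∈ ℕ}`. -/
def SigmaD (ω : ℝ) (m : ℕ) : Set ℕ := {n : ℕ | 2 ≤ n ∧ n ≤ m ∧ ∃ l : ℕ, (n : ℝ) * ω = l * π}

/-- The mixed partial derivative `∂_x^a ∂_y^b f (0)`. -/
def ptDeriv (a b : ℕ) (f : V2 → ℝ) : ℝ :=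
  iteratedFDeriv ℝ (a + b) f 0
    (fun m : Fin (a+b) => if (m : ℕ) < a then EuclideanSpace.single 0 1 else EuclideanSpace.single 1 1)

/-- Iterated classical partial derivative `∂_x^a ∂_y^b φ`. -/
def multiD (a b : ℕ) (φ : V2 → ℝ) : V2 → ℝ := (pdR 0)^[a] ((pdR 1)^[b] φ)

/-- `g a b` are the weak derivatives `∂_x^a ∂_y^b (g 0 0)` on `D`. -/
def HasWeakDerivsOn (D : Set V2) (g : ℕ → ℕ → V2 → ℝ) : Prop :=
  ∀ a b : ℕ, ∀ φ : V2 → ℝ, IsTestR D φ →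
    ∫ x, g 0 0 x * multiD a b φ x = (-1 : ℝ) ^ (a + b) * ∫ x, g a b x * φ x

/-- The `W^{k,p}(D)` Sobolev norm. -/
def WnormOn (k : ℕ) (p : ℝ) (D : Set V2) (f : V2 → ℝ) : ℝ≥0∞ :=
  ⨅ g ∈ {g : ℕ → ℕ → V2 → ℝ | g 0 0 = f ∧ HasWeakDerivsOn D g},
    ∑ a ∈ Finset.range (k+1), ∑ b ∈ Finset.range (k+1-a),
      (∫⁻ x in D, (‖g a b x‖₊ : ℝ≥0∞) ^ p) ^ p⁻¹

/-- The weighted `K^{k,p}_γ(D)` norm. -/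
def KpNormOn (k : ℕ) (p γ : ℝ) (D : Set V2) (f : V2 → ℝ) : ℝ≥0∞ :=
  ⨅ g ∈ {g : ℕ → ℕ → V2 → ℝ | g 0 0 = f ∧ HasWeakDerivsOn D g},
    ∑ a ∈ Finset.range (k+1), ∑ b ∈ Finset.range (k+1-a),
      (∫⁻ x in D, ENNReal.ofReal (‖x‖ ^ (p * ((a+b : ℝ) - k + γ))) * (‖g a b x‖₊ : ℝ≥0∞) ^ p) ^ p⁻¹

/-- The weighted `K^k_γ(D)` norm (`L²`-based). -/
def K2NormOn (k : ℕ) (γ : ℝ) (D : Set V2) (f : V2 → ℝ) : ℝ≥0∞ :=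
  ⨅ g ∈ {g : ℕ → ℕ → V2 → ℝ | g 0 0 = f ∧ HasWeakDerivsOn D g},
    (∑ a ∈ Finset.range (k+1), ∑ b ∈ Finset.range (k+1-a),
      ∫⁻ x in D, ENNReal.ofReal (‖x‖ ^ (2 * ((a+b : ℝ) - k + γ))) * (‖g a b x‖₊ : ℝ≥0∞) ^ 2) ^ (1/2 : ℝ)

/-- The `L^p`-based Besov `B^s_{p,q}(D)` norm (for `s ≥ 0` non-integer), realized as
`(W^{⌊s⌋,p}(D), W^{⌊s⌋+1,p}(D))_{s-⌊s⌋,q}`. -/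
def besovNormLp (s p : ℝ) (q : ℝ≥0∞) (D : Set V2) (f : V2 → ℝ) : ℝ≥0∞ :=
  interpNorm (WnormOn ⌊s⌋₊ p D) (WnormOn (⌊s⌋₊ + 1) p D) (s - ⌊s⌋₊) q f


-- linear map V2 → ℂ
def LL : V2 →L[ℝ] ℂ :=
  Complex.ofRealCLM.comp (EuclideanSpace.proj (0 : Fin 2)) +
    Complex.I • Complex.ofRealCLM.comp (EuclideanSpace.proj (1 : Fin 2))

lemma LL_apply (x : V2) : LL x = (x 0 : ℂ) + (x 1 : ℝ) * Complex.I := by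
  simp [LL, mul_comm]

@[simp] lemma LL_re (x : V2) : (LL x).re = x 0 := by simp [LL_apply]
@[simp] lemma LL_im (x : V2) : (LL x).im = x 1 := by simp [LL_apply]

lemma LL_single0 : LL (EuclideanSpace.single (0 : Fin 2) 1) = 1 := by
  simp [LL_apply, EuclideanSpace.single_apply]
lemma LL_single1 : LL (EuclideanSpace.single (1 : Fin 2) 1) = Complex.I := by
  simp [LL_apply, EuclideanSpace.single_apply]

@[simp] lemma polarPt_coord0 (r θ : ℝ) : (polarPt r θ) 0 = r * Real.cos θ := by
  simp [polarPt]
@[simp] lemma polarPt_coord1 (r θ : ℝ) : (polarPt r θ) 1 = r * Real.sin θ := by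
  simp [polarPt]

lemma LL_polarPt (r θ : ℝ) : LL (polarPt r θ) = (r : ℂ) * Complex.exp (θ * Complex.I) := by
  rw [LL_apply, polarPt_coord0, polarPt_coord1, Complex.exp_mul_I]
  push_cast
  ring

-- derivative machinery for x ↦ (F (LL x)).im / .re
lemma hasFDerivAt_im_comp {F : ℂ → ℂ} {w : ℂ} {x : V2} (h : HasDerivAt F w (LL x)) :
    HasFDerivAt (fun y => (F (LL y)).im) (Complex.imCLM.comp (w • (LL : V2 →L[ℝ] ℂ))) x := by
  have h1 : HasFDerivAt (F ∘ LL) (w • (LL : V2 →L[ℝ] ℂ)) x :=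
    h.comp_hasFDerivAt x (LL.hasFDerivAt)
  exact (Complex.imCLM.hasFDerivAt).comp x h1

lemma hasFDerivAt_re_comp {F : ℂ → ℂ} {w : ℂ} {x : V2} (h : HasDerivAt F w (LL x)) :
    HasFDerivAt (fun y => (F (LL y)).re) (Complex.reCLM.comp (w • (LL : V2 →L[ℝ] ℂ))) x := by
  have h1 : HasFDerivAt (F ∘ LL) (w • (LL : V2 →L[ℝ] ℂ)) x :=
    h.comp_hasFDerivAt x (LL.hasFDerivAt)
  exact (Complex.reCLM.hasFDerivAt).comp x h1

lemma pdR_im_comp {F : ℂ → ℂ} {w : ℂ} {x : V2} (h : HasDerivAt F w (LL x)) :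
    pdR 0 (fun y => (F (LL y)).im) x = w.im ∧ pdR 1 (fun y => (F (LL y)).im) x = w.re := by
  constructor
  · rw [pdR, (hasFDerivAt_im_comp h).fderiv]
    simp [LL_single0]
  · rw [pdR, (hasFDerivAt_im_comp h).fderiv]
    simp [LL_single1, Complex.smul_im]
lemma pdR_re_comp {F : ℂ → ℂ} {w : ℂ} {x : V2} (h : HasDerivAt F w (LL x)) :
    pdR 0 (fun y => (F (LL y)).re) x = w.re ∧ pdR 1 (fun y => (F (LL y)).re) x = -w.im := by
  constructor
  · rw [pdR, (hasFDerivAt_re_comp h).fderiv]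
    simp [LL_single0]
  · rw [pdR, (hasFDerivAt_re_comp h).fderiv]
    simp [LL_single1, Complex.smul_re]

lemma harmonic_key {S : Set V2} (hS : IsOpen S) {F F' : ℂ → ℂ} {f : V2 → ℝ}
    (hfe : ∀ y ∈ S, f y = (F (LL y)).im)
    (hF : ∀ y ∈ S, HasDerivAt F (F' (LL y)) (LL y))
    (hF' : ∀ y ∈ S, DifferentiableAt ℂ F' (LL y))
    {x : V2} (hx : x ∈ S) :
    lapl f x = 0 ∧ (∀ i, DifferentiableAt ℝ (pdR i f) x) ∧ DifferentiableAt ℝ f x := by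
  -- first derivatives on S
  have hfeq : ∀ y ∈ S, f =ᶠ[nhds y] fun z => (F (LL z)).im := fun y hy =>
    Filter.eventuallyEq_of_mem (hS.mem_nhds hy) hfe
  have hpd0 : ∀ y ∈ S, pdR 0 f y = (fun z => (F' (LL z)).im) y := by
    intro y hy
    rw [pdR, (hfeq y hy).fderiv_eq, (hasFDerivAt_im_comp (hF y hy)).fderiv]
    simp [LL_single0]
  have hpd1 : ∀ y ∈ S, pdR 1 f y = (fun z => (F' (LL z)).re) y := by
    intro y hy
    rw [pdR, (hfeq y hy).fderiv_eq, (hasFDerivAt_im_comp (hF y hy)).fderiv]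
    simp [LL_single1, Complex.smul_im]
  have hF'x : HasDerivAt F' (deriv F' (LL x)) (LL x) := (hF' x hx).hasDerivAt
  have h0 : pdR 0 (pdR 0 f) x = (deriv F' (LL x)).im := by
    rw [pdR, Filter.EventuallyEq.fderiv_eq (Filter.eventuallyEq_of_mem (hS.mem_nhds hx) hpd0),
      (hasFDerivAt_im_comp hF'x).fderiv]
    simp [LL_single0]
  have h1 : pdR 1 (pdR 1 f) x = -(deriv F' (LL x)).im := by
    rw [pdR, Filter.EventuallyEq.fderiv_eq (Filter.eventuallyEq_of_mem (hS.mem_nhds hx) hpd1),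
      (hasFDerivAt_re_comp hF'x).fderiv]
    simp [LL_single1, Complex.smul_re]
  refine ⟨by rw [lapl, h0, h1]; ring, fun i => ?_, ?_⟩
  · fin_cases i
    · exact (Filter.EventuallyEq.differentiableAt_iff
        (Filter.eventuallyEq_of_mem (hS.mem_nhds hx) hpd0)).2
        (hasFDerivAt_im_comp hF'x).differentiableAt
    · exact (Filter.EventuallyEq.differentiableAt_iff
        (Filter.eventuallyEq_of_mem (hS.mem_nhds hx) hpd1)).2
        (hasFDerivAt_re_comp hF'x).differentiableAt
  · exact (Filter.EventuallyEq.differentiableAt_iff (hfeq x hx)).2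
      (hasFDerivAt_im_comp (hF x hx)).differentiableAt

lemma lapl_add {S : Set V2} (hS : IsOpen S) {f g : V2 → ℝ} {x : V2} (hx : x ∈ S)
    (hf1 : ∀ y ∈ S, DifferentiableAt ℝ f y) (hg1 : ∀ y ∈ S, DifferentiableAt ℝ g y)
    (hf2 : ∀ i, DifferentiableAt ℝ (pdR i f) x) (hg2 : ∀ i, DifferentiableAt ℝ (pdR i g) x) :
    lapl (fun y => f y + g y) x = lapl f x + lapl g x := by
  have hpd : ∀ i : Fin 2, ∀ y ∈ S, pdR i (fun y => f y + g y) y = pdR i f y + pdR i g y := by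
    intro i y hy
    rw [pdR, fderiv_fun_add (hf1 y hy) (hg1 y hy)]
    rfl
  have h2 : ∀ i : Fin 2, pdR i (pdR i (fun y => f y + g y)) x = pdR i (pdR i f) x + pdR i (pdR i g) x := by
    intro i
    rw [pdR, Filter.EventuallyEq.fderiv_eq
      (Filter.eventuallyEq_of_mem (hS.mem_nhds hx) (hpd i)),
      fderiv_fun_add (hf2 i) (hg2 i)]
    rfl
  rw [lapl, lapl, lapl, h2 0, h2 1]; ring

-- monomials
def mono (a b : ℕ) : V2 → ℝ := fun x => x 0 ^ a * x 1 ^ b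

def monoD (a b : ℕ) (x : V2) : V2 →L[ℝ] ℝ :=
  ((a : ℝ) * mono (a-1) b x) • (EuclideanSpace.proj (0 : Fin 2)) +
    ((b : ℝ) * mono a (b-1) x) • (EuclideanSpace.proj (1 : Fin 2))

lemma hasFDerivAt_mono (a b : ℕ) (x : V2) : HasFDerivAt (mono a b) (monoD a b x) x := by
  have e0 : (⇑(EuclideanSpace.proj (0 : Fin 2) : V2 →L[ℝ] ℝ)) = (fun y : V2 => y 0) := rfl
  have e1 : (⇑(EuclideanSpace.proj (1 : Fin 2) : V2 →L[ℝ] ℝ)) = (fun y : V2 => y 1) := rfl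
  have h0 : HasFDerivAt (fun y : V2 => y 0) (EuclideanSpace.proj (0 : Fin 2) : V2 →L[ℝ] ℝ) x := by
    rw [← e0]; exact (EuclideanSpace.proj (0 : Fin 2) : V2 →L[ℝ] ℝ).hasFDerivAt
  have h1 : HasFDerivAt (fun y : V2 => y 1) (EuclideanSpace.proj (1 : Fin 2) : V2 →L[ℝ] ℝ) x := by
    rw [← e1]; exact (EuclideanSpace.proj (1 : Fin 2) : V2 →L[ℝ] ℝ).hasFDerivAt
  have hx0 : HasFDerivAt (fun y : V2 => y 0 ^ a)
      (((a : ℝ) * x 0 ^ (a-1)) • (EuclideanSpace.proj (0 : Fin 2) : V2 →L[ℝ] ℝ)) x :=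
    (hasDerivAt_pow a (x 0)).comp_hasFDerivAt x h0
  have hx1 : HasFDerivAt (fun y : V2 => y 1 ^ b)
      (((b : ℝ) * x 1 ^ (b-1)) • (EuclideanSpace.proj (1 : Fin 2) : V2 →L[ℝ] ℝ)) x :=
    (hasDerivAt_pow b (x 1)).comp_hasFDerivAt x h1
  have := hx0.mul hx1
  refine HasFDerivAt.congr_fderiv (f := mono a b) this ?_
  ext v
  simp [monoD, mono, ContinuousLinearMap.add_apply, ContinuousLinearMap.smul_apply, smul_eq_mul]
  ring

@[simp] lemma monoD_apply0 (a b : ℕ) (x : V2) :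
    monoD a b x (EuclideanSpace.single (0 : Fin 2) 1) = (a : ℝ) * mono (a-1) b x := by
  simp [monoD, EuclideanSpace.single_apply]
@[simp] lemma monoD_apply1 (a b : ℕ) (x : V2) :
    monoD a b x (EuclideanSpace.single (1 : Fin 2) 1) = (b : ℝ) * mono a (b-1) x := by
  simp [monoD, EuclideanSpace.single_apply]

def combo (M : ℕ) (c : ℕ → ℝ) (A B : ℕ → ℕ) : V2 → ℝ :=
  fun x => ∑ m ∈ Finset.range M, c m * mono (A m) (B m) x

lemma hasFDerivAt_combo (M : ℕ) (c : ℕ → ℝ) (A B : ℕ → ℕ) (x : V2) :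
    HasFDerivAt (combo M c A B) (∑ m ∈ Finset.range M, c m • monoD (A m) (B m) x) x :=
  HasFDerivAt.fun_sum fun m _ => (hasFDerivAt_mono (A m) (B m) x).const_mul (c m)

lemma pdR0_combo (M : ℕ) (c : ℕ → ℝ) (A B : ℕ → ℕ) :
    pdR 0 (combo M c A B) = combo M (fun m => c m * A m) (fun m => A m - 1) B := by
  funext x
  rw [pdR, (hasFDerivAt_combo M c A B x).fderiv]
  rw [ContinuousLinearMap.sum_apply]
  refine Finset.sum_congr rfl fun m _ => ?_
  rw [ContinuousLinearMap.smul_apply, monoD_apply0, smul_eq_mul]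
  ring

lemma pdR1_combo (M : ℕ) (c : ℕ → ℝ) (A B : ℕ → ℕ) :
    pdR 1 (combo M c A B) = combo M (fun m => c m * B m) A (fun m => B m - 1) := by
  funext x
  rw [pdR, (hasFDerivAt_combo M c A B x).fderiv]
  rw [ContinuousLinearMap.sum_apply]
  refine Finset.sum_congr rfl fun m _ => ?_
  rw [ContinuousLinearMap.smul_apply, monoD_apply1, smul_eq_mul]
  ring

lemma lapl_combo (M : ℕ) (c : ℕ → ℝ) (A B : ℕ → ℕ) (x : V2) :
    lapl (combo M c A B) x
      = combo M (fun m => c m * A m * (A m - 1 : ℕ)) (fun m => A m - 1 - 1) B x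
        + combo M (fun m => c m * B m * (B m - 1 : ℕ)) A (fun m => B m - 1 - 1) x := by
  simp only [lapl, pdR0_combo, pdR1_combo]

-- coefficients of the particular solution
def Acoef (i m : ℕ) : ℕ := (i - 2*m) * (i - 2*m - 1)
def Bcoef (j m : ℕ) : ℕ := (j + 2*m + 1) * (j + 2*m + 2)

def cc (i j : ℕ) : ℕ → ℝ
  | 0 => -(1 / (Bcoef j 0 : ℝ))
  | (m+1) => -(cc i j m) * (Acoef i m) / (Bcoef j (m+1))

lemma Bcoef_pos (j m : ℕ) : (0 : ℝ) < (Bcoef j m : ℝ) := by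
  have : 0 < Bcoef j m := by unfold Bcoef; positivity
  exact_mod_cast this

lemma cc_succ_mul (i j m : ℕ) :
    cc i j (m+1) * (Bcoef j (m+1) : ℝ) = -(cc i j m * (Acoef i m : ℝ)) := by
  rw [cc, div_mul_cancel₀ _ (ne_of_gt (Bcoef_pos j (m+1)))]
  ring

lemma cc_zero_mul (i j : ℕ) : cc i j 0 * (Bcoef j 0 : ℝ) = -1 := by
  rw [cc, neg_mul, one_div, inv_mul_cancel₀ (ne_of_gt (Bcoef_pos j 0))]

-- the particular polynomial solution q
def qfun (i j : ℕ) : V2 → ℝ := combo (i/2 + 1) (cc i j) (fun m => i - 2*m) (fun m => j + 2*m + 2)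

lemma Acoef_half (i : ℕ) : Acoef i (i/2) = 0 := by
  unfold Acoef
  have h : i - 2*(i/2) = i % 2 := by omega
  rw [h]
  rcases Nat.mod_two_eq_zero_or_one i with h2 | h2 <;> simp [h2]

lemma cc_top (i j : ℕ) : cc i j (i/2 + 1) = 0 := by
  rw [cc, Acoef_half]
  simp

lemma lapl_qfun (i j : ℕ) (x : V2) : lapl (qfun i j) x = -(x 0 ^ i * x 1 ^ j) := by
  rw [qfun, lapl_combo]
  have key : ∀ m : ℕ,
      cc i j m * ((i - 2*m) : ℕ) * (((i - 2*m) - 1 : ℕ) : ℝ) * mono (i - 2*m - 1 - 1) (j + 2*m + 2) x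
        + cc i j m * ((j + 2*m + 2 : ℕ) : ℝ) * (((j + 2*m + 2) - 1 : ℕ) : ℝ) * mono (i - 2*m) (j + 2*m + 2 - 1 - 1) x
      = (cc i j m * (Bcoef j m : ℝ) * mono (i - 2*m) (j + 2*m) x)
        - (cc i j (m+1) * (Bcoef j (m+1) : ℝ) * mono (i - 2*(m+1)) (j + 2*(m+1)) x) := by
    intro m
    have e1 : i - 2*m - 1 - 1 = i - 2*(m+1) := by omega
    have e2 : j + 2*m + 2 - 1 - 1 = j + 2*m := by omega
    have e3 : j + 2*(m+1) = j + 2*m + 2 := by omega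
    rw [e1, e2, e3, cc_succ_mul]
    have e4 : ((i - 2*m : ℕ) : ℝ) * (((i - 2*m) - 1 : ℕ) : ℝ) = (Acoef i m : ℝ) := by
      rw [Acoef]; push_cast; ring
    have e5 : ((j + 2*m + 2 : ℕ) : ℝ) * (((j + 2*m + 2) - 1 : ℕ) : ℝ) = (Bcoef j m : ℝ) := by
      rw [Bcoef]; push_cast [Nat.add_sub_cancel]; ring
    calc cc i j m * ((i - 2*m : ℕ) : ℝ) * (((i - 2*m) - 1 : ℕ) : ℝ) * mono (i - 2*(m+1)) (j + 2*m + 2) x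
          + cc i j m * ((j + 2*m + 2 : ℕ) : ℝ) * (((j + 2*m + 2) - 1 : ℕ) : ℝ) * mono (i - 2*m) (j + 2*m) x
        = cc i j m * (Acoef i m : ℝ) * mono (i - 2*(m+1)) (j + 2*m + 2) x
          + cc i j m * (Bcoef j m : ℝ) * mono (i - 2*m) (j + 2*m) x := by
          rw [← e4, ← e5]; ring
      _ = _ := by ring
  unfold combo
  rw [← Finset.sum_add_distrib]
  trans (∑ m ∈ Finset.range (i/2+1),
      (cc i j m * (Bcoef j m : ℝ) * mono (i - 2*m) (j + 2*m) x
        - cc i j (m+1) * (Bcoef j (m+1) : ℝ) * mono (i - 2*(m+1)) (j + 2*(m+1)) x))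
  · exact Finset.sum_congr rfl fun m _ => key m
  · rw [Finset.sum_range_sub'
      (fun m => cc i j m * (Bcoef j m : ℝ) * mono (i - 2*m) (j + 2*m) x) (i/2 + 1)]
    rw [cc_top]
    simp only [zero_mul, Nat.mul_zero, Nat.sub_zero, Nat.add_zero, sub_zero]
    rw [cc_zero_mul]
    simp [mono]

lemma qfun_ray0 (i j : ℕ) (r : ℝ) : qfun i j (polarPt r 0) = 0 := by
  unfold qfun combo mono
  apply Finset.sum_eq_zero
  intro m _
  rw [polarPt_coord1]
  simp

def Qw (i j : ℕ) (ω : ℝ) : ℝ :=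
  ∑ m ∈ Finset.range (i/2 + 1),
    cc i j m * (Real.cos ω ^ (i - 2*m) * Real.sin ω ^ (j + 2*m + 2))

lemma qfun_rayW (i j k : ℕ) (hij : i + j = k) (r ω : ℝ) :
    qfun i j (polarPt r ω) = r ^ (k+2) * Qw i j ω := by
  unfold qfun combo Qw
  rw [Finset.mul_sum]
  refine Finset.sum_congr rfl fun m hm => ?_
  have hm' : 2*m ≤ i := by
    have := Finset.mem_range.1 hm
    omega
  have hexp : (i - 2*m) + (j + 2*m + 2) = k + 2 := by omega
  rw [mono, polarPt_coord0, polarPt_coord1, mul_pow, mul_pow, ← hexp, pow_add]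
  ring

lemma Qw_pi (i j : ℕ) : Qw i j π = 0 := by
  unfold Qw
  apply Finset.sum_eq_zero
  intro m _
  rw [Real.sin_pi]
  simp

open MvPolynomial in
def qpoly (i j : ℕ) : MvPolynomial (Fin 2) ℝ :=
  ∑ m ∈ Finset.range (i/2 + 1),
    MvPolynomial.C (cc i j m) * MvPolynomial.X 0 ^ (i - 2*m) * MvPolynomial.X 1 ^ (j + 2*m + 2)

lemma qpoly_eval (i j : ℕ) (x : V2) :
    MvPolynomial.eval (fun t : Fin 2 => x t) (qpoly i j) = qfun i j x := by
  unfold qpoly qfun combo mono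
  rw [map_sum]
  exact Finset.sum_congr rfl fun m _ => by simp [mul_assoc]

lemma qpoly_degree (i j k : ℕ) (hij : i + j = k) : (qpoly i j).totalDegree ≤ k + 2 := by
  unfold qpoly
  refine le_trans (MvPolynomial.totalDegree_finset_sum _ _) (Finset.sup_le fun m hm => ?_)
  have hm' : m ≤ i/2 := by have := Finset.mem_range.1 hm; omega
  have h2 : (MvPolynomial.C (cc i j m) * MvPolynomial.X 0 ^ (i - 2*m)
      : MvPolynomial (Fin 2) ℝ).totalDegree ≤ i - 2*m :=
    le_trans (MvPolynomial.totalDegree_mul _ _)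
      (by rw [MvPolynomial.totalDegree_C, MvPolynomial.totalDegree_X_pow]; omega)
  refine le_trans (MvPolynomial.totalDegree_mul _ _) ?_
  rw [MvPolynomial.totalDegree_X_pow]
  exact le_trans (Nat.add_le_add_right h2 (j + 2*m + 2)) (by omega)


-- real and imaginary part polynomials of z^n
def ZP : ℕ → MvPolynomial (Fin 2) ℝ × MvPolynomial (Fin 2) ℝ
  | 0 => (1, 0)
  | (n+1) => (MvPolynomial.X 0 * (ZP n).1 - MvPolynomial.X 1 * (ZP n).2,
      MvPolynomial.X 0 * (ZP n).2 + MvPolynomial.X 1 * (ZP n).1)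

lemma ZP_eval (n : ℕ) (x : V2) :
    MvPolynomial.eval (fun t : Fin 2 => x t) (ZP n).1 = ((LL x) ^ n).re ∧
    MvPolynomial.eval (fun t : Fin 2 => x t) (ZP n).2 = ((LL x) ^ n).im := by
  induction n with
  | zero => simp [ZP]
  | succ n ih =>
    rw [pow_succ, Complex.mul_re, Complex.mul_im, ← ih.1, ← ih.2, ZP]
    constructor <;> · simp [LL_re, LL_im]; ring
lemma ZP_degree (n : ℕ) : (ZP n).1.totalDegree ≤ n ∧ (ZP n).2.totalDegree ≤ n := by
  induction n with
  | zero => simp [ZP]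
  | succ n ih =>
    have hx : ∀ (s : Fin 2) (p : MvPolynomial (Fin 2) ℝ),
        p.totalDegree ≤ n → (MvPolynomial.X s * p).totalDegree ≤ n + 1 := by
      intro s p hp
      refine le_trans (MvPolynomial.totalDegree_mul _ _) ?_
      rw [MvPolynomial.totalDegree_X]
      omega
    rw [ZP]
    exact ⟨le_trans (MvPolynomial.totalDegree_sub _ _) (max_le (hx _ _ ih.1) (hx _ _ ih.2)),
      le_trans (MvPolynomial.totalDegree_add _ _) (max_le (hx _ _ ih.2) (hx _ _ ih.1))⟩


def slit2 : Set ℂ := {z | z.im ≠ 0 ∨ z.re < 0}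

lemma isOpen_slit2 : IsOpen slit2 := by
  have : slit2 = (Complex.im ⁻¹' {t | t ≠ 0}) ∪ (Complex.re ⁻¹' {t | t < 0}) := by
    ext z; simp [slit2]
  rw [this]
  exact ((isOpen_ne_fun Complex.continuous_im continuous_const).union
    (isOpen_lt Complex.continuous_re continuous_const))

lemma slit2_ne_zero {z : ℂ} (hz : z ∈ slit2) : z ≠ 0 := by
  rintro rfl
  simp [slit2] at hz

lemma neg_mem_slitPlane {z : ℂ} (hz : z ∈ slit2) : -z ∈ Complex.slitPlane := by
  rw [Complex.mem_slitPlane_iff]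
  rcases hz with h | h
  · right; simpa using h
  · left; simpa using h

lemma polarAngle_LL (y : V2) :
    polarAngle y = if (LL y).arg < 0 then (LL y).arg + 2*π else (LL y).arg := by
  rw [polarAngle, LL_apply]

lemma norm_eq_absLL (y : V2) : ‖y‖ = ‖LL y‖ := by
  rw [EuclideanSpace.norm_eq, Complex.norm_def, Complex.normSq_apply, LL_re, LL_im]
  congr 1
  simp [Fin.sum_univ_two, Real.norm_eq_abs, sq_abs]
  ring

lemma log_neg_eq {z : ℂ} (hz : z ∈ slit2) (y : V2) (hy : LL y = z) :
    Complex.log (-z) + (π : ℂ) * Complex.I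
      = (Real.log ‖z‖ : ℂ) + (polarAngle y : ℂ) * Complex.I := by
  apply Complex.ext
  · simp [Complex.log_re]
  · simp only [Complex.add_im, Complex.log_im, Complex.ofReal_im, Complex.mul_im,
      Complex.ofReal_re, Complex.I_im, Complex.I_re, Complex.ofReal_im]
    rw [polarAngle_LL, hy]
    rcases lt_trichotomy z.im 0 with h | h | h
    · rw [Complex.arg_neg_eq_arg_add_pi_of_im_neg h, if_pos (Complex.arg_neg_iff.2 h)]
      ring
    · have hre : z.re < 0 := by rcases hz with h' | h'; exact absurd h h'; exact h'
      rw [Complex.arg_eq_zero_iff.2 ⟨by simpa using hre.le, by simpa using h⟩,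
        Complex.arg_eq_pi_iff.2 ⟨hre, h⟩, if_neg (not_lt.2 Real.pi_pos.le)]
    · rw [Complex.arg_neg_eq_arg_sub_pi_of_im_pos h,
        if_neg (not_lt.2 (Complex.arg_nonneg_iff.2 h.le))]
      ring

lemma zpow_polar {z : ℂ} (hz : z ∈ slit2) (y : V2) (hy : LL y = z) (n : ℕ) :
    z ^ n = ((‖z‖ ^ n : ℝ) : ℂ) *
      (((Real.cos (n * polarAngle y) : ℝ) : ℂ) + ((Real.sin (n * polarAngle y) : ℝ) : ℂ) * Complex.I) := by
  conv_lhs => rw [← Complex.norm_mul_exp_arg_mul_I z]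
  rw [mul_pow, ← Complex.exp_nat_mul]
  have h1 : ((n : ℂ) * ((z.arg : ℂ) * Complex.I)) = ((n * z.arg : ℝ) : ℂ) * Complex.I := by
    push_cast; ring
  rw [h1, Complex.exp_mul_I, ← Complex.ofReal_cos, ← Complex.ofReal_sin, ← Complex.ofReal_pow]
  have hc : Real.cos (n * polarAngle y) = Real.cos (n * z.arg) ∧
      Real.sin (n * polarAngle y) = Real.sin (n * z.arg) := by
    rw [polarAngle_LL, hy]
    split
    · constructor
      · rw [mul_add, mul_comm ((n:ℝ)) (2*π)]
        rw [show (n:ℝ) * z.arg + 2*π*n = n * z.arg + n * (2*π) by ring]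
        exact Real.cos_add_nat_mul_two_pi _ n
      · rw [show (n:ℝ) * (z.arg + 2*π) = n * z.arg + n * (2*π) by ring]
        exact Real.sin_add_nat_mul_two_pi _ n
    · exact ⟨rfl, rfl⟩
  rw [hc.1, hc.2]

lemma singLogSin_eq {z : ℂ} (hz : z ∈ slit2) (y : V2) (hy : LL y = z) (n : ℕ) :
    singLogSin n y = (z ^ n * (Complex.log (-z) + (π : ℂ) * Complex.I)).im := by
  rw [zpow_polar hz y hy n, log_neg_eq hz y hy, singLogSin, norm_eq_absLL, hy,
    Real.rpow_natCast]
  set R := ‖z‖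
  set θ := polarAngle y
  set c := Real.cos (n * θ)
  set s := Real.sin (n * θ)
  simp only [Complex.mul_im, Complex.mul_re, Complex.add_re, Complex.add_im,
    Complex.ofReal_re, Complex.ofReal_im, Complex.I_re, Complex.I_im]
  ring

lemma norm_polarPt (r θ : ℝ) (hr : 0 ≤ r) : ‖polarPt r θ‖ = r := by
  rw [norm_eq_absLL, LL_polarPt, norm_mul, Complex.norm_exp_ofReal_mul_I, mul_one,
    Complex.norm_real, Real.norm_eq_abs, abs_of_nonneg hr]

lemma polarAngle_polarPt0 (r : ℝ) (hr : 0 ≤ r) : polarAngle (polarPt r 0) = 0 := by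
  rw [polarAngle_LL, LL_polarPt]
  have : ((r:ℂ) * Complex.exp ((0:ℝ) * Complex.I)).arg = 0 := by
    norm_num
    exact Complex.arg_ofReal_of_nonneg hr
  rw [this, if_neg (lt_irrefl 0)]

lemma polarAngle_polarPt (r θ : ℝ) (hr : 0 < r) (h1 : 0 < θ) (h2 : θ < 2*π) :
    polarAngle (polarPt r θ) = θ := by
  rw [polarAngle_LL, LL_polarPt]
  rcases le_or_gt θ π with hle | hgt
  · have harg : ((r : ℂ) * Complex.exp (θ * Complex.I)).arg = θ := by
      rw [Complex.exp_mul_I]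
      exact Complex.arg_mul_cos_add_sin_mul_I hr ⟨by linarith [Real.pi_pos], hle⟩
    rw [harg, if_neg (not_lt.2 h1.le)]
  · have hexp : Complex.exp ((θ : ℂ) * Complex.I) = Complex.exp (((θ - 2*π : ℝ) : ℂ) * Complex.I) := by
      rw [show ((θ - 2*π : ℝ) : ℂ) * Complex.I = (θ:ℂ) * Complex.I - (2*π:ℂ)*Complex.I by push_cast; ring,
        Complex.exp_sub]
      rw [show ((2*π:ℂ))*Complex.I = (2*π)*Complex.I by ring, Complex.exp_two_pi_mul_I]
      simp
    have harg : ((r : ℂ) * Complex.exp ((θ:ℂ) * Complex.I)).arg = θ - 2*π := by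
      rw [hexp, Complex.exp_mul_I]
      refine Complex.arg_mul_cos_add_sin_mul_I hr ⟨by linarith, by linarith [Real.pi_pos]⟩
    rw [harg, if_pos (by linarith [Real.pi_pos])]
    ring

def SS : Set V2 := LL ⁻¹' slit2

lemma isOpen_SS : IsOpen SS := isOpen_slit2.preimage LL.continuous

lemma cone_subset_SS (ω : ℝ) (hω2 : ω < 2*π) : coneSet ω ⊆ SS := by
  rintro x ⟨r, θ, hr, hθ0, hθω, rfl⟩
  have h2 : θ < 2*π := lt_trans hθω hω2
  simp only [SS, slit2, Set.mem_preimage, Set.mem_setOf_eq]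
  by_cases hsin : Real.sin θ = 0
  · obtain ⟨m, hm⟩ := Real.sin_eq_zero_iff.1 hsin
    have hpi := Real.pi_pos
    have hm1 : m = 1 := by
      have h0 : (0:ℝ) < m * π := hm ▸ hθ0
      have h1 : (m:ℝ) * π < 2*π := hm ▸ h2
      have hm0 : 0 < m := by
        by_contra h
        push_neg at h
        have : (m:ℝ) ≤ 0 := by exact_mod_cast h
        nlinarith
      have hm2 : m < 2 := by
        have : (m:ℝ) < 2 := by nlinarith
        exact_mod_cast this
      omega
    right
    rw [LL_re, polarPt_coord0]
    have hθπ : θ = π := by rw [← hm, hm1]; norm_num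
    rw [hθπ, Real.cos_pi]
    linarith
  · left
    rw [LL_im, polarPt_coord1]
    exact mul_ne_zero (ne_of_gt hr) hsin

def GG (n : ℕ) (a : ℝ) : ℂ → ℂ :=
  fun z => (a:ℂ) * (z^n * (Complex.log (-z) + (π:ℂ) * Complex.I))
def GG' (n : ℕ) (a : ℝ) : ℂ → ℂ :=
  fun z => (a:ℂ) * ((n:ℂ) * z^(n-1) * (Complex.log (-z) + (π:ℂ) * Complex.I) + z^(n-1))

lemma hasDerivAt_logneg {z : ℂ} (hz : z ∈ slit2) :
    HasDerivAt (fun w => Complex.log (-w)) z⁻¹ z := by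
  have h1 := Complex.hasDerivAt_log (neg_mem_slitPlane hz)
  have h2 : HasDerivAt (fun w : ℂ => -w) (-1) z := hasDerivAt_neg z
  have h3 := h1.comp z h2
  have : (-z)⁻¹ * (-1) = z⁻¹ := by
    rw [inv_neg]; ring
  rw [← this]
  exact h3

lemma hasDerivAt_GG (n : ℕ) (hn : 1 ≤ n) (a : ℝ) {z : ℂ} (hz : z ∈ slit2) :
    HasDerivAt (GG n a) (GG' n a z) z := by
  have hlog := (hasDerivAt_logneg hz).add_const ((π:ℂ) * Complex.I)
  have h := ((hasDerivAt_pow n z).mul hlog).const_mul (a:ℂ)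
  have hzn : z ≠ 0 := slit2_ne_zero hz
  have hval : (a:ℂ) * ((n:ℂ) * z^(n-1) * (Complex.log (-z) + (π:ℂ)*Complex.I) + z^n * z⁻¹)
      = GG' n a z := by
    rw [GG']
    congr 2
    rw [show z^n = z^(n-1) * z by rw [← pow_succ]; congr 1; omega, mul_assoc,
      mul_inv_cancel₀ hzn, mul_one]
  rw [GG'] at hval ⊢
  rw [← hval]
  exact h
lemma diffAt_GG' (n : ℕ) (a : ℝ) {z : ℂ} (hz : z ∈ slit2) :
    DifferentiableAt ℂ (GG' n a) z := by
  have hlog : DifferentiableAt ℂ (fun w => Complex.log (-w)) z :=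
    (hasDerivAt_logneg hz).differentiableAt
  exact (((((differentiableAt_pow (n-1)).const_mul ((n:ℂ))).mul
    (hlog.add_const ((π:ℂ) * Complex.I))).add (differentiableAt_pow (n-1))).const_mul (a:ℂ))

lemma im_a_zn (a r θ : ℝ) (n : ℕ) :
    ((a:ℂ) * (LL (polarPt r θ))^n).im = a * r^n * Real.sin (n*θ) := by
  rw [LL_polarPt, mul_pow, ← Complex.exp_nat_mul,
    show ((n:ℂ) * ((θ:ℂ)*Complex.I)) = ((n*θ:ℝ):ℂ)*Complex.I by push_cast; ring,
    Complex.exp_mul_I, ← Complex.ofReal_cos, ← Complex.ofReal_sin, ← Complex.ofReal_pow]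
  simp only [Complex.mul_im, Complex.mul_re, Complex.add_re, Complex.add_im,
    Complex.ofReal_re, Complex.ofReal_im, Complex.I_re, Complex.I_im]
  ring

lemma singLogSin_ray0 (n : ℕ) (r : ℝ) (hr : 0 < r) : singLogSin n (polarPt r 0) = 0 := by
  rw [singLogSin, polarAngle_polarPt0 r hr.le]
  simp

lemma singLogSin_rayW (n : ℕ) (r ω : ℝ) (hr : 0 < r) (h1 : 0 < ω) (h2 : ω < 2*π) :
    singLogSin n (polarPt r ω)
      = r^n * (Real.log r * Real.sin (n*ω) + ω * Real.cos (n*ω)) := by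
  rw [singLogSin, norm_polarPt r ω hr.le, polarAngle_polarPt r ω hr h1 h2, Real.rpow_natCast]


lemma qfun_pdiff (i j : ℕ) (t : Fin 2) (x : V2) : DifferentiableAt ℝ (pdR t (qfun i j)) x := by
  have h0 : DifferentiableAt ℝ (pdR 0 (qfun i j)) x := by
    unfold qfun
    rw [pdR0_combo]
    exact (hasFDerivAt_combo _ _ _ _ x).differentiableAt
  have h1 : DifferentiableAt ℝ (pdR 1 (qfun i j)) x := by
    unfold qfun
    rw [pdR1_combo]
    exact (hasFDerivAt_combo _ _ _ _ x).differentiableAt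
  fin_cases t
  · exact h0
  · exact h1

/-- **Particular solutions with monomial right-hand side, Dirichlet case** (Lemma 2.4).
For `i + j = k` there is a polynomial `p̃` of degree `k+2` and a harmonic
`p' ∈ span{r^n(ln r sin(nφ) + φ cos(nφ)) : n ∈ Σ^D_{k+2}}` such that
`p = p̃ + p'` satisfies `−Δp = x^i y^j` on `C` and `p = 0` on both lateral rays.
If `ω = π`, `p'` may be taken to be zero. -/
theorem polynomial_solution_dirichlet
    (ω : ℝ) (hω0 : 0 < ω) (hω2 : ω < 2 * π)
    (i j k : ℕ) (hij : i + j = k) :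
    ∃ ptilde p' : V2 → ℝ,
      IsPolyDeg (k + 2) ptilde ∧
      p' ∈ Submodule.span ℝ (singLogSin '' SigmaD ω (k + 2)) ∧
      (∀ x ∈ coneSet ω, lapl (fun y => ptilde y + p' y) x = -(x 0 ^ i * x 1 ^ j)) ∧
      (∀ x ∈ rayFull 0 ∪ rayFull ω, ptilde x + p' x = 0) ∧
      (ω = π → p' = 0) := by
  have hq_diff : ∀ y, DifferentiableAt ℝ (qfun i j) y := fun y =>
    (hasFDerivAt_combo _ _ _ _ y).differentiableAt
  by_cases hs : Real.sin (((k+2:ℕ):ℝ) * ω) = 0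
  · -- logarithmic case
    have hcos : Real.cos (((k+2:ℕ):ℝ) * ω) ≠ 0 := by
      intro hc
      have h := Real.sin_sq_add_cos_sq (((k+2:ℕ):ℝ) * ω)
      rw [hs, hc] at h
      norm_num at h
    set clog : ℝ := -(Qw i j ω) / (ω * Real.cos (((k+2:ℕ):ℝ) * ω)) with hclog
    refine ⟨qfun i j, clog • singLogSin (k+2),
      ⟨qpoly i j, qpoly_degree i j k hij, fun x => (qpoly_eval i j x).symm⟩, ?_, ?_, ?_, ?_⟩
    · refine Submodule.smul_mem _ clog (Submodule.subset_span ?_)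
      refine ⟨k+2, ⟨by omega, le_refl _, ?_⟩, rfl⟩
      obtain ⟨m, hm⟩ := Real.sin_eq_zero_iff.1 hs
      have hm0 : 0 < m := by
        by_contra h
        push_neg at h
        have h1 : (0:ℝ) < ((k+2:ℕ):ℝ) * ω := by positivity
        have h2 : (m:ℝ) ≤ 0 := by exact_mod_cast h
        nlinarith [Real.pi_pos]
      refine ⟨m.toNat, ?_⟩
      rw [← hm]
      congr 1
      exact_mod_cast (Int.toNat_of_nonneg hm0.le).symm
    · intro x hx
      have hxS : x ∈ SS := cone_subset_SS ω hω2 hx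
      have hfe : ∀ y ∈ SS, (clog • singLogSin (k+2)) y = (GG (k+2) clog (LL y)).im := by
        intro y hy
        rw [Pi.smul_apply, smul_eq_mul, singLogSin_eq (z := LL y) hy y rfl (k+2), GG]
        simp [Complex.mul_im]
      have hg : ∀ y ∈ SS, lapl (clog • singLogSin (k+2)) y = 0 ∧
          (∀ t, DifferentiableAt ℝ (pdR t (clog • singLogSin (k+2))) y) ∧
          DifferentiableAt ℝ (clog • singLogSin (k+2)) y := fun y hy =>
        harmonic_key isOpen_SS hfe
          (fun y hy => hasDerivAt_GG (k+2) (by omega) clog hy)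
          (fun y hy => diffAt_GG' (k+2) clog hy) hy
      rw [lapl_add isOpen_SS hxS (fun y _ => hq_diff y) (fun y hy => (hg y hy).2.2)
        (fun t => qfun_pdiff i j t x) (fun t => (hg x hxS).2.1 t), lapl_qfun, (hg x hxS).1,
        add_zero]
    · rintro x (⟨r, hr, rfl⟩ | ⟨r, hr, rfl⟩)
      · rw [qfun_ray0, Pi.smul_apply, smul_eq_mul, singLogSin_ray0 _ _ hr, mul_zero, add_zero]
      · rw [qfun_rayW i j k hij, Pi.smul_apply, smul_eq_mul,
          singLogSin_rayW (k+2) r ω hr hω0 hω2, hs, mul_zero, zero_add]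
        have hne : ω * Real.cos (((k+2:ℕ):ℝ)*ω) ≠ 0 := mul_ne_zero (ne_of_gt hω0) hcos
        have hkey : clog * (ω * Real.cos (((k+2:ℕ):ℝ)*ω)) = -(Qw i j ω) := by
          rw [hclog]
          exact div_mul_cancel₀ _ hne
        linear_combination (r^(k+2)) * hkey
    · intro hω
      have hQ : Qw i j ω = 0 := by rw [hω]; exact Qw_pi i j
      have hc0 : clog = 0 := by rw [hclog, hQ]; simp
      rw [hc0, zero_smul]
  · -- polynomial case
    set a : ℝ := -(Qw i j ω) / Real.sin (((k+2:ℕ):ℝ) * ω) with ha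
    refine ⟨fun y => qfun i j y + ((a:ℂ) * (LL y)^(k+2)).im, 0, ?_,
      Submodule.zero_mem _, ?_, ?_, fun _ => rfl⟩
    · refine ⟨qpoly i j + MvPolynomial.C a * (ZP (k+2)).2, ?_, ?_⟩
      · refine le_trans (MvPolynomial.totalDegree_add _ _) (max_le (qpoly_degree i j k hij) ?_)
        refine le_trans (MvPolynomial.totalDegree_mul _ _) ?_
        rw [MvPolynomial.totalDegree_C]
        simpa using (ZP_degree (k+2)).2
      · intro x
        rw [map_add, qpoly_eval, map_mul, MvPolynomial.eval_C, (ZP_eval (k+2) x).2]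
        congr 1
        simp [Complex.mul_im]
    · intro x hx
      have hfun : (fun y => (fun y => qfun i j y + ((a:ℂ) * (LL y)^(k+2)).im) y + (0:V2→ℝ) y)
          = fun y => qfun i j y + ((a:ℂ) * (LL y)^(k+2)).im := by
        funext y
        simp
      rw [hfun]
      have hg : ∀ y : V2, lapl (fun y => ((a:ℂ) * (LL y)^(k+2)).im) y = 0 ∧
          (∀ t, DifferentiableAt ℝ (pdR t (fun y => ((a:ℂ) * (LL y)^(k+2)).im)) y) ∧
          DifferentiableAt ℝ (fun y => ((a:ℂ) * (LL y)^(k+2)).im) y := fun y =>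
        harmonic_key (S := (Set.univ : Set V2)) isOpen_univ
          (F := fun z => (a:ℂ) * z^(k+2))
          (F' := fun z => (a:ℂ) * (((k+2:ℕ):ℂ) * z^(k+2-1)))
          (fun y _ => rfl)
          (fun y _ => (hasDerivAt_pow (k+2) (LL y)).const_mul (a:ℂ))
          (fun y _ => ((differentiableAt_pow (k+2-1)).const_mul (((k+2:ℕ):ℂ))).const_mul (a:ℂ))
          (Set.mem_univ y)
      rw [lapl_add isOpen_univ (Set.mem_univ x) (fun y _ => hq_diff y) (fun y _ => (hg y).2.2)
        (fun t => qfun_pdiff i j t x) (fun t => (hg x).2.1 t), lapl_qfun, (hg x).1, add_zero]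
    · rintro x (⟨r, hr, rfl⟩ | ⟨r, hr, rfl⟩)
      · show qfun i j (polarPt r 0) + ((a:ℂ) * (LL (polarPt r 0))^(k+2)).im + (0:V2→ℝ) _ = 0
        rw [qfun_ray0, im_a_zn]
        simp
      · show qfun i j (polarPt r ω) + ((a:ℂ) * (LL (polarPt r ω))^(k+2)).im + (0:V2→ℝ) _ = 0
        simp only [Pi.zero_apply, add_zero]
        rw [qfun_rayW i j k hij, im_a_zn]
        have hkey : a * Real.sin (((k+2:ℕ):ℝ) * ω) = -(Qw i j ω) := by
          rw [ha]
          exact div_mul_cancel₀ _ hs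
        linear_combination (r^(k+2)) * hkey

end
end

section
/- Abstract interpolation lemma. Let (X₁, ‖·‖_{X₁}) ⊂ (X₀, ‖·‖_{X₀}) and (Y₁, ‖·‖_{Y₁}) ⊂ (Y₀, ‖·‖_{Y₀}) be Banach spaces with continuous embeddings. Let J ∈ ℕ, q_j, p_j ∈ [1,∞] and θ_j ∈ (0,1) for j = 1,…,J with 0 < θ₁ < θ₂ < … < θ_J < 1. Let T̃ : X₀ → Y₀, S₁ : X₁ → Y₁, and S_{θ_j} : X_{θ_j, p_j} → Y_{θ_j, q_j} (j = 1,…,J) be bounded linear operators such that T̃ f = S₁(f) + Σ_{j=1}^J S_{θ_j}(f) for all f ∈ X₁. Then T̃ maps (X₀, X₁)_{θ₁, p₁} boundedly and linearly into (Y₀, Y₁)_{θ₁, ∞}, i.e., there is C > 0 with ‖T̃ f‖_{(Y₀,Y₁)_{θ₁,∞}} ≤ C ‖f‖_{(X₀,X₁)_{θ₁,p₁}} for all f ∈ (X₀,X₁)_{θ₁,p₁}. -/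
noncomputable section

open scoped Classical NNReal ENNReal

/-- The K-functional of `u ∈ X₀` for the pair `(X₀, X₁)`, where `X₁` is continuously
embedded in `X₀` via `ι`: `K(t,u) = inf_{v ∈ X₁} (‖u − ι v‖_{X₀} + t ‖v‖_{X₁})`. -/
def KfunE {X₀ X₁ : Type*} [NormedAddCommGroup X₀] [NormedSpace ℝ X₀]
    [NormedAddCommGroup X₁] [NormedSpace ℝ X₁]
    (ι : X₁ →L[ℝ] X₀) (t : ℝ) (u : X₀) : ℝ≥0∞ :=
  ⨅ v : X₁, (ENNReal.ofReal ‖u - ι v‖ + ENNReal.ofReal t * ENNReal.ofReal ‖v‖)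

/-- The real interpolation ("K-method") norm `‖u‖_{(X₀,X₁)_{θ,q}}`. -/
def interpNormE {X₀ X₁ : Type*} [NormedAddCommGroup X₀] [NormedSpace ℝ X₀]
    [NormedAddCommGroup X₁] [NormedSpace ℝ X₁]
    (ι : X₁ →L[ℝ] X₀) (θ : ℝ) (q : ℝ≥0∞) (u : X₀) : ℝ≥0∞ :=
  if q = ⊤ then ⨆ t ∈ Set.Ioi (0:ℝ), ENNReal.ofReal (t ^ (-θ)) * KfunE ι t u
  else (∫⁻ t in Set.Ioi (0:ℝ),
      ENNReal.ofReal t⁻¹ * (ENNReal.ofReal (t ^ (-θ)) * KfunE ι t u) ^ q.toReal) ^ q.toReal⁻¹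

open Set MeasureTheory intervalIntegral

/-! ### Real auxiliary lemmas -/

lemma rpow_anti {x y e : ℝ} (hx : 0 < x) (hxy : x ≤ y) (he : e ≤ 0) : y ^ e ≤ x ^ e := by
  have hy : 0 < y := hx.trans_le hxy
  rw [← neg_neg e, Real.rpow_neg hy.le, Real.rpow_neg hx.le]
  exact inv_anti₀ (Real.rpow_pos_of_pos hx _)
    (Real.rpow_le_rpow hx.le hxy (by linarith))

lemma rpow_le_add_one {x r : ℝ} (hx : 0 ≤ x) (hr0 : 0 ≤ r) (hr1 : r ≤ 1) : x ^ r ≤ x + 1 := by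
  rcases le_total x 1 with h | h
  · exact (Real.rpow_le_one hx h hr0).trans (by linarith)
  · calc x ^ r ≤ x ^ (1:ℝ) := Real.rpow_le_rpow_of_exponent_le h hr1
    _ = x := Real.rpow_one x
    _ ≤ x + 1 := by linarith

lemma ofReal_rpow_mul_rpow {t : ℝ} (ht : 0 < t) (a b : ℝ) :
    ENNReal.ofReal (t ^ a) * ENNReal.ofReal (t ^ b) = ENNReal.ofReal (t ^ (a + b)) := by
  rw [← ENNReal.ofReal_mul (Real.rpow_nonneg ht.le a), ← Real.rpow_add ht]

/-! ### Lintegral of powers -/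

lemma lint_Ioc {a t : ℝ} (ha : 0 < a) (ht : 0 < t) :
    ∫⁻ s in Set.Ioc (0:ℝ) t, ENNReal.ofReal (s ^ (a - 1)) = ENNReal.ofReal (t ^ a / a) := by
  have hint : IntegrableOn (fun s : ℝ => s ^ (a - 1)) (Set.Ioc 0 t) := by
    have := (intervalIntegrable_rpow' (a := 0) (b := t) (r := a - 1) (by linarith)).1
    simpa [Set.uIoc_of_le ht.le] using this
  rw [← MeasureTheory.ofReal_integral_eq_lintegral_ofReal hint]
  · congr 1
    have : ∫ s in Set.Ioc (0:ℝ) t, s ^ (a - 1) = ∫ s in (0:ℝ)..t, s ^ (a - 1) :=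
      (intervalIntegral.integral_of_le ht.le).symm
    rw [this, show (∫ s in (0:ℝ)..t, s ^ (a-1)) = (t ^ (a-1+1) - (0:ℝ) ^ (a-1+1))/(a-1+1) from integral_rpow (Or.inl (by linarith))]
    rw [Real.zero_rpow (by linarith : a - 1 + 1 ≠ 0)]
    ring_nf
  · filter_upwards [ae_restrict_mem measurableSet_Ioc] with s hs
    exact Real.rpow_nonneg hs.1.le _

lemma lint_Ioi {a t : ℝ} (ha : 0 < a) (ht : 0 < t) :
    ∫⁻ s in Set.Ioi t, ENNReal.ofReal (s ^ (-a - 1)) = ENNReal.ofReal (t ^ (-a) / a) := by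
  have hint : IntegrableOn (fun s : ℝ => s ^ (-a - 1)) (Set.Ioi t) :=
    integrableOn_Ioi_rpow_of_lt (by linarith) ht
  rw [← MeasureTheory.ofReal_integral_eq_lintegral_ofReal hint]
  · congr 1
    rw [integral_Ioi_rpow_of_lt (by linarith) ht]
    have : -a - 1 + 1 = -a := by ring
    rw [this]
    field_simp
  · filter_upwards [ae_restrict_mem measurableSet_Ioi] with s hs
    exact Real.rpow_nonneg (ht.trans hs).le _

/-! ### K-functional basics -/

section Kfun
variable {X₀ X₁ : Type*} [NormedAddCommGroup X₀] [NormedSpace ℝ X₀]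
    [NormedAddCommGroup X₁] [NormedSpace ℝ X₁] (ι : X₁ →L[ℝ] X₀)

lemma KfunE_le_norm (t : ℝ) (u : X₀) : KfunE ι t u ≤ ENNReal.ofReal ‖u‖ := by
  refine (iInf_le _ 0).trans ?_
  simp

lemma KfunE_le_emb (t : ℝ) (v : X₁) :
    KfunE ι t (ι v) ≤ ENNReal.ofReal t * ENNReal.ofReal ‖v‖ := by
  refine (iInf_le _ v).trans ?_
  simp

lemma KfunE_add_le (t : ℝ) (u w : X₀) :
    KfunE ι t (u + w) ≤ KfunE ι t u + KfunE ι t w := by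
  simp only [KfunE]
  rw [ENNReal.iInf_add]
  refine le_iInf fun v₁ => ?_
  rw [ENNReal.add_iInf]
  refine le_iInf fun v₂ => ?_
  refine le_trans (iInf_le _ (v₁ + v₂)) ?_
  have h1 : ‖u + w - ι (v₁ + v₂)‖ ≤ ‖u - ι v₁‖ + ‖w - ι v₂‖ := by
    have : u + w - ι (v₁ + v₂) = (u - ι v₁) + (w - ι v₂) := by
      rw [map_add]; abel
    rw [this]; exact norm_add_le _ _
  have h2 : ENNReal.ofReal ‖v₁ + v₂‖ ≤ ENNReal.ofReal ‖v₁‖ + ENNReal.ofReal ‖v₂‖ := by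
    rw [← ENNReal.ofReal_add (norm_nonneg _) (norm_nonneg _)]
    exact ENNReal.ofReal_le_ofReal (norm_add_le _ _)
  calc ENNReal.ofReal ‖u + w - ι (v₁ + v₂)‖ + ENNReal.ofReal t * ENNReal.ofReal ‖v₁ + v₂‖
      ≤ (ENNReal.ofReal ‖u - ι v₁‖ + ENNReal.ofReal ‖w - ι v₂‖)
        + ENNReal.ofReal t * (ENNReal.ofReal ‖v₁‖ + ENNReal.ofReal ‖v₂‖) := by
        refine add_le_add ?_ (mul_le_mul_right h2 _)
        refine le_trans (ENNReal.ofReal_le_ofReal h1) ?_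
        rw [ENNReal.ofReal_add (norm_nonneg _) (norm_nonneg _)]
    _ = _ := by ring
 
lemma KfunE_mono (u : X₀) : Monotone fun t => KfunE ι t u := by
  intro t s hts
  exact iInf_mono fun v => add_le_add le_rfl
    (mul_le_mul_left (ENNReal.ofReal_le_ofReal hts) _)

lemma KfunE_measurable (u : X₀) : Measurable fun t => KfunE ι t u :=
  (KfunE_mono ι u).measurable

lemma KfunE_sum_le {n : ℕ} (t : ℝ) (g : Fin n → X₀) :
    KfunE ι t (∑ j, g j) ≤ ∑ j, KfunE ι t (g j) := by
  classical
  induction n with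
  | zero => simpa using KfunE_le_norm ι t 0
  | succ n ih =>
      rw [Fin.sum_univ_castSucc, Fin.sum_univ_castSucc (f := fun j => KfunE ι t (g j))]
      exact (KfunE_add_le ι t _ _).trans (add_le_add (ih _) le_rfl)

lemma KfunE_le_of_sub (t s : ℝ) (u : X₀) (v : X₁) :
    KfunE ι s (ι v) ≤ KfunE ι s u + ENNReal.ofReal ‖u - ι v‖ := by
  have h := KfunE_add_le ι s u (ι v - u)
  have e : u + (ι v - u) = ι v := by abel
  rw [e] at h
  exact h.trans (add_le_add le_rfl ((KfunE_le_norm ι s _).trans (by rw [norm_sub_rev])))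

end Kfun

/-! ### Pointwise bound by the interpolation norm (N1) -/

section Interp
variable {X₀ X₁ : Type*} [NormedAddCommGroup X₀] [NormedSpace ℝ X₀]
    [NormedAddCommGroup X₁] [NormedSpace ℝ X₁] (ι : X₁ →L[ℝ] X₀)

lemma pointwise_le_interp {θ : ℝ} (hθ0 : 0 ≤ θ) (hθ1 : θ ≤ 1) {q : ℝ≥0∞} (hq : 1 ≤ q)
    {t : ℝ} (ht : 0 < t) (u : X₀) :
    ENNReal.ofReal (t ^ (-θ)) * KfunE ι t u ≤ 4 * interpNormE ι θ q u := by
  by_cases hqt : q = ⊤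
  · rw [interpNormE, if_pos hqt]
    refine le_trans (le_biSup (f := fun s : ℝ => ENNReal.ofReal (s ^ (-θ)) * KfunE ι s u) (show t ∈ Set.Ioi (0:ℝ) from ht)) ?_
    exact le_mul_of_one_le_left zero_le (by norm_num)
  · rw [interpNormE, if_neg hqt]
    set q' := q.toReal with hq'def
    have hq'1 : 1 ≤ q' := by
      rw [hq'def, ← ENNReal.toReal_one]
      exact ENNReal.toReal_mono hqt hq
    have hq'0 : 0 < q' := lt_of_lt_of_le one_pos hq'1
    set c : ℝ≥0∞ := ENNReal.ofReal ((2*t) ^ (-θ)) * KfunE ι t u with hc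
    have h2t : ENNReal.ofReal (2*t)⁻¹ * ENNReal.ofReal t = ENNReal.ofReal 2⁻¹ := by
      rw [← ENNReal.ofReal_mul (by positivity)]
      congr 1
      field_simp
    have hlow : ENNReal.ofReal 2⁻¹ * c ^ q'
        ≤ ∫⁻ s in Set.Ioi (0:ℝ),
            ENNReal.ofReal s⁻¹ * (ENNReal.ofReal (s ^ (-θ)) * KfunE ι s u) ^ q' := by
      refine le_trans ?_
        (lintegral_mono_set (fun s hs => lt_trans ht hs.1 : Set.Ioc t (2*t) ⊆ Set.Ioi 0))
      have hvol : volume (Set.Ioc t (2*t)) = ENNReal.ofReal t := by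
        rw [Real.volume_Ioc]; congr 1; ring
      calc ENNReal.ofReal 2⁻¹ * c ^ q'
          = ENNReal.ofReal (2*t)⁻¹ * c ^ q' * ENNReal.ofReal t := by rw [← h2t]; ring
        _ = (ENNReal.ofReal (2*t)⁻¹ * c ^ q') * volume (Set.Ioc t (2*t)) := by rw [hvol]
        _ = ∫⁻ _ in Set.Ioc t (2*t), ENNReal.ofReal (2*t)⁻¹ * c ^ q' :=
            (setLIntegral_const _ _).symm
        _ ≤ _ := by
            refine setLIntegral_mono' measurableSet_Ioc fun s hs => ?_
            have hs0 : 0 < s := ht.trans hs.1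
            refine mul_le_mul ?_ ?_ zero_le zero_le
            · exact ENNReal.ofReal_le_ofReal (inv_anti₀ hs0 hs.2)
            · refine ENNReal.rpow_le_rpow ?_ hq'0.le
              rw [hc]
              exact mul_le_mul
                (ENNReal.ofReal_le_ofReal (rpow_anti hs0 hs.2 (neg_nonpos.mpr hθ0)))
                (KfunE_mono ι u hs.1.le) zero_le zero_le
    have hc2 : ENNReal.ofReal 2⁻¹ * (ENNReal.ofReal (t ^ (-θ)) * KfunE ι t u) ≤ c := by
      rw [hc, ← mul_assoc, ← ENNReal.ofReal_mul (by norm_num)]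
      refine mul_le_mul_left (ENNReal.ofReal_le_ofReal ?_) _
      rw [Real.mul_rpow two_pos.le ht.le]
      refine mul_le_mul_of_nonneg_right ?_ (Real.rpow_nonneg ht.le _)
      rw [← Real.rpow_neg_one]
      exact Real.rpow_le_rpow_of_exponent_le one_le_two (by linarith)
    have h41 : (4:ℝ≥0∞) * (ENNReal.ofReal 2⁻¹ * ENNReal.ofReal 2⁻¹) = 1 := by
      rw [← ENNReal.ofReal_mul (by norm_num : (0:ℝ) ≤ 2⁻¹),
        show (4:ℝ≥0∞) = ENNReal.ofReal 4 by simp,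
        ← ENNReal.ofReal_mul (by norm_num)]
      norm_num
    calc ENNReal.ofReal (t ^ (-θ)) * KfunE ι t u
        = 4 * (ENNReal.ofReal 2⁻¹ * ENNReal.ofReal 2⁻¹)
            * (ENNReal.ofReal (t ^ (-θ)) * KfunE ι t u) := by rw [h41, one_mul]
      _ = 4 * (ENNReal.ofReal 2⁻¹
            * (ENNReal.ofReal 2⁻¹ * (ENNReal.ofReal (t ^ (-θ)) * KfunE ι t u))) := by ring
      _ ≤ 4 * (ENNReal.ofReal 2⁻¹ * c) := by
          exact mul_le_mul_right (mul_le_mul_right hc2 _) _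
      _ ≤ 4 * ((ENNReal.ofReal 2⁻¹) ^ q'⁻¹ * c) := by
          refine mul_le_mul_right (mul_le_mul_left ?_ _) _
          calc ENNReal.ofReal 2⁻¹ = (ENNReal.ofReal 2⁻¹) ^ (1:ℝ) := (ENNReal.rpow_one _).symm
            _ ≤ (ENNReal.ofReal 2⁻¹) ^ q'⁻¹ :=
              ENNReal.rpow_le_rpow_of_exponent_ge
                (ENNReal.ofReal_le_one.mpr (by norm_num))
                (inv_le_one_of_one_le₀ hq'1)
      _ = 4 * (ENNReal.ofReal 2⁻¹ * c ^ q') ^ q'⁻¹ := by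
          rw [ENNReal.mul_rpow_of_nonneg _ _ (by positivity), ← ENNReal.rpow_mul,
            mul_inv_cancel₀ hq'0.ne', ENNReal.rpow_one]
      _ ≤ 4 * (∫⁻ s in Set.Ioi (0:ℝ),
            ENNReal.ofReal s⁻¹ * (ENNReal.ofReal (s ^ (-θ)) * KfunE ι s u) ^ q') ^ q'⁻¹ :=
          mul_le_mul_right (ENNReal.rpow_le_rpow hlow (by positivity)) _

lemma interp_top_le {θ : ℝ} (hθ0 : 0 ≤ θ) (hθ1 : θ ≤ 1) {q : ℝ≥0∞} (hq : 1 ≤ q) (u : X₀) :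
    interpNormE ι θ ⊤ u ≤ 4 * interpNormE ι θ q u := by
  rw [interpNormE, if_pos rfl]
  exact iSup₂_le fun t ht => pointwise_le_interp ι hθ0 hθ1 hq ht u

end Interp

/-! ### Tail norms -/

def TailE {X₀ X₁ : Type*} [NormedAddCommGroup X₀] [NormedSpace ℝ X₀]
    [NormedAddCommGroup X₁] [NormedSpace ℝ X₁]
    (ι : X₁ →L[ℝ] X₀) (θ : ℝ) (p : ℝ≥0∞) (t : ℝ) (u : X₀) : ℝ≥0∞ :=
  if p = ⊤ then ⨆ s ∈ Set.Ioi t, ENNReal.ofReal (s ^ (-θ)) * KfunE ι s u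
  else (∫⁻ s in Set.Ioi t,
      ENNReal.ofReal s⁻¹ * (ENNReal.ofReal (s ^ (-θ)) * KfunE ι s u) ^ p.toReal) ^ p.toReal⁻¹

section Tail
variable {X₀ X₁ : Type*} [NormedAddCommGroup X₀] [NormedSpace ℝ X₀]
    [NormedAddCommGroup X₁] [NormedSpace ℝ X₁] (ι : X₁ →L[ℝ] X₀)

lemma tailE_le_interp (θ : ℝ) (p : ℝ≥0∞) {t : ℝ} (ht : 0 < t) (u : X₀) :
    TailE ι θ p t u ≤ interpNormE ι θ p u := by
  rw [TailE, interpNormE]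
  split_ifs with h
  · exact iSup_le fun s => iSup_le fun hs =>
      le_biSup (f := fun r : ℝ => ENNReal.ofReal (r ^ (-θ)) * KfunE ι r u)
        (show s ∈ Set.Ioi (0:ℝ) from ht.trans hs)
  · refine ENNReal.rpow_le_rpow ?_ (by positivity)
    exact lintegral_mono_set (fun s hs => ht.trans hs)

lemma lint_weight {p' : ℝ} (hp'0 : 0 < p') {s : ℝ} (hs : 0 < s) (C : ℝ≥0∞) (b : ℝ) :
    ENNReal.ofReal s⁻¹ * (ENNReal.ofReal (s ^ b) * C) ^ p'
      = ENNReal.ofReal (s ^ (b * p' - 1)) * C ^ p' := by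
  rw [ENNReal.mul_rpow_of_nonneg _ _ hp'0.le,
    ENNReal.ofReal_rpow_of_pos (Real.rpow_pos_of_pos hs b), ← Real.rpow_mul hs.le,
    ← mul_assoc, ← Real.rpow_neg_one s, ofReal_rpow_mul_rpow hs]
  congr 3
  ring

lemma aux_root {t c p' : ℝ} (ht : 0 < t) (hp' : 1 ≤ p') (hc : 0 < c) (e : ℝ) :
    (t ^ (e * p') / (c * p')) ^ p'⁻¹ ≤ t ^ e * (c⁻¹ + 1) := by
  have hp'0 : 0 < p' := lt_of_lt_of_le one_pos hp'
  have hcp' : 0 < c * p' := mul_pos hc hp'0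
  have h1 : (t ^ (e * p')) ^ p'⁻¹ = t ^ e := by
    rw [← Real.rpow_mul ht.le, mul_assoc, mul_inv_cancel₀ hp'0.ne', mul_one]
  rw [Real.div_rpow (Real.rpow_nonneg ht.le _) hcp'.le, h1, div_eq_mul_inv,
    ← Real.inv_rpow hcp'.le]
  refine mul_le_mul_of_nonneg_left ?_ (Real.rpow_nonneg ht.le _)
  refine (rpow_le_add_one (inv_nonneg.mpr hcp'.le) (inv_nonneg.mpr hp'0.le)
    (inv_le_one_of_one_le₀ hp')).trans ?_
  have : (c * p')⁻¹ ≤ c⁻¹ := by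
    rw [mul_inv]
    calc c⁻¹ * p'⁻¹ ≤ c⁻¹ * 1 :=
      mul_le_mul_of_nonneg_left (inv_le_one_of_one_le₀ hp') (inv_nonneg.mpr hc.le)
    _ = c⁻¹ := mul_one _
  linarith

lemma ennreal_root_mul {A C : ℝ≥0∞} {p' : ℝ} (hp'0 : 0 < p') :
    (A * C ^ p') ^ p'⁻¹ = A ^ p'⁻¹ * C := by
  rw [ENNReal.mul_rpow_of_nonneg _ _ (by positivity), ← ENNReal.rpow_mul,
    mul_inv_cancel₀ hp'0.ne', ENNReal.rpow_one]

/-- Lemma B: tail estimate at a higher exponent `θ` from a uniform `θ₁` bound. -/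
lemma tailE_le_of_unif {θ₁ θ : ℝ} (hlt : θ₁ < θ) {p : ℝ≥0∞} (hp : 1 ≤ p) {t : ℝ} (ht : 0 < t)
    (u : X₀) (N : ℝ≥0∞) (hNtop : N ≠ ⊤)
    (hN : ∀ s : ℝ, 0 < s → ENNReal.ofReal (s ^ (-θ₁)) * KfunE ι s u ≤ N) :
    TailE ι θ p t u ≤ ENNReal.ofReal (t ^ (θ₁ - θ) * ((θ - θ₁)⁻¹ + 1)) * N := by
  have hmul1 : (1:ℝ) ≤ (θ - θ₁)⁻¹ + 1 := by
    have : 0 ≤ (θ - θ₁)⁻¹ := inv_nonneg.mpr (by linarith)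
    linarith
  have key : ∀ s : ℝ, t < s → ENNReal.ofReal (s ^ (-θ)) * KfunE ι s u
      ≤ ENNReal.ofReal (s ^ (θ₁ - θ)) * N := by
    intro s hs
    have hs0 : 0 < s := ht.trans hs
    have : ENNReal.ofReal (s ^ (-θ)) = ENNReal.ofReal (s ^ (θ₁ - θ)) * ENNReal.ofReal (s ^ (-θ₁)) := by
      rw [ofReal_rpow_mul_rpow hs0]
      congr 1
      ring
    rw [this, mul_assoc]
    exact mul_le_mul_right (hN s hs0) _
  rw [TailE]
  split_ifs with hptop
  · refine iSup₂_le fun s hs => (key s hs).trans ?_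
    refine mul_le_mul_left (ENNReal.ofReal_le_ofReal ?_) _
    calc s ^ (θ₁ - θ) ≤ t ^ (θ₁ - θ) := rpow_anti ht (le_of_lt hs) (by linarith)
      _ ≤ t ^ (θ₁ - θ) * ((θ - θ₁)⁻¹ + 1) :=
        le_mul_of_one_le_right (Real.rpow_nonneg ht.le _) hmul1
  · set p' := p.toReal with hp'def
    have hp'1 : 1 ≤ p' := by
      rw [hp'def, ← ENNReal.toReal_one]
      exact ENNReal.toReal_mono hptop hp
    have hp'0 : 0 < p' := lt_of_lt_of_le one_pos hp'1
    have hbound : (∫⁻ s in Set.Ioi t,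
        ENNReal.ofReal s⁻¹ * (ENNReal.ofReal (s ^ (-θ)) * KfunE ι s u) ^ p')
        ≤ ENNReal.ofReal (t ^ ((θ₁ - θ) * p') / ((θ - θ₁) * p')) * N ^ p' := by
      have step : ∀ s ∈ Set.Ioi t, ENNReal.ofReal s⁻¹
            * (ENNReal.ofReal (s ^ (-θ)) * KfunE ι s u) ^ p'
          ≤ ENNReal.ofReal (s ^ ((θ₁ - θ) * p' - 1)) * N ^ p' := by
        intro s hs
        have hs0 : 0 < s := ht.trans hs
        calc ENNReal.ofReal s⁻¹ * (ENNReal.ofReal (s ^ (-θ)) * KfunE ι s u) ^ p'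
            ≤ ENNReal.ofReal s⁻¹ * (ENNReal.ofReal (s ^ (θ₁ - θ)) * N) ^ p' :=
              mul_le_mul_right (ENNReal.rpow_le_rpow (key s hs) hp'0.le) _
          _ = ENNReal.ofReal (s ^ ((θ₁ - θ) * p' - 1)) * N ^ p' := lint_weight hp'0 hs0 N _
      calc (∫⁻ s in Set.Ioi t,
            ENNReal.ofReal s⁻¹ * (ENNReal.ofReal (s ^ (-θ)) * KfunE ι s u) ^ p')
          ≤ ∫⁻ s in Set.Ioi t, ENNReal.ofReal (s ^ ((θ₁ - θ) * p' - 1)) * N ^ p' :=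
            setLIntegral_mono' measurableSet_Ioi step
        _ = (∫⁻ s in Set.Ioi t, ENNReal.ofReal (s ^ ((θ₁ - θ) * p' - 1))) * N ^ p' :=
            lintegral_mul_const' _ _ (ENNReal.rpow_ne_top_of_nonneg hp'0.le hNtop)
        _ = ENNReal.ofReal (t ^ ((θ₁ - θ) * p') / ((θ - θ₁) * p')) * N ^ p' := by
            have : (θ₁ - θ) * p' - 1 = -((θ - θ₁) * p') - 1 := by ring
            rw [this, lint_Ioi (mul_pos (by linarith) hp'0) ht]
            congr 2
            ring_nf
    calc (∫⁻ s in Set.Ioi t,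
            ENNReal.ofReal s⁻¹ * (ENNReal.ofReal (s ^ (-θ)) * KfunE ι s u) ^ p') ^ p'⁻¹
          ≤ (ENNReal.ofReal (t ^ ((θ₁ - θ) * p') / ((θ - θ₁) * p')) * N ^ p') ^ p'⁻¹ :=
          ENNReal.rpow_le_rpow hbound (inv_nonneg.mpr hp'0.le)
      _ = (ENNReal.ofReal (t ^ ((θ₁ - θ) * p') / ((θ - θ₁) * p'))) ^ p'⁻¹ * N :=
          ennreal_root_mul hp'0
      _ ≤ ENNReal.ofReal (t ^ (θ₁ - θ) * ((θ - θ₁)⁻¹ + 1)) * N := by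
          refine mul_le_mul_left ?_ _
          rw [ENNReal.ofReal_rpow_of_pos (div_pos (Real.rpow_pos_of_pos ht _) (mul_pos (by linarith) hp'0))]
          exact ENNReal.ofReal_le_ofReal (aux_root ht hp'1 (by linarith) _)

end Tail

/-! ### Lemma A : interpolation norm of a decomposable element -/

section LemmaA
variable {X₀ X₁ : Type*} [NormedAddCommGroup X₀] [NormedSpace ℝ X₀]
    [NormedAddCommGroup X₁] [NormedSpace ℝ X₁] (ι : X₁ →L[ℝ] X₀)

lemma ofReal_rpow_mul_self {s : ℝ} (hs : 0 < s) (a : ℝ) :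
    ENNReal.ofReal (s ^ a) * ENNReal.ofReal s = ENNReal.ofReal (s ^ (a + 1)) := by
  have := ofReal_rpow_mul_rpow hs a 1
  rwa [Real.rpow_one] at this

lemma interp_le_of_decomp {θ : ℝ} (hθ0 : 0 < θ) (hθ1 : θ < 1) {p : ℝ≥0∞} (hp : 1 ≤ p)
    {t : ℝ} (ht : 0 < t) (w u : X₀) {B E : ℝ≥0∞} (hB : B ≠ ⊤) (hE : E ≠ ⊤)
    (h1 : ∀ s ∈ Set.Ioc (0:ℝ) t, KfunE ι s w ≤ ENNReal.ofReal s * B)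
    (h2 : ∀ s ∈ Set.Ioi t, KfunE ι s w ≤ KfunE ι s u + E) :
    interpNormE ι θ p w ≤
      ENNReal.ofReal ((1-θ)⁻¹ + 1) * (ENNReal.ofReal (t ^ (1-θ)) * B)
      + 2 * ENNReal.ofReal (θ⁻¹ + 1) * (ENNReal.ofReal (t ^ (-θ)) * E)
      + 2 * TailE ι θ p t u := by
  have hone1 : (1:ℝ≥0∞) ≤ ENNReal.ofReal ((1-θ)⁻¹ + 1) := by
    rw [ENNReal.one_le_ofReal]
    have : 0 ≤ (1-θ)⁻¹ := inv_nonneg.mpr (by linarith)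
    linarith
  have hone2 : (1:ℝ≥0∞) ≤ 2 * ENNReal.ofReal (θ⁻¹ + 1) := by
    refine le_mul_of_le_of_one_le (by norm_num) ?_
    rw [ENNReal.one_le_ofReal]
    have : 0 ≤ θ⁻¹ := inv_nonneg.mpr hθ0.le
    linarith
  by_cases hptop : p = ⊤
  · rw [interpNormE, if_pos hptop, TailE, if_pos hptop]
    refine iSup₂_le fun s hs => ?_
    rcases le_or_gt s t with hst | hst
    · -- small s : use h1
      have hs0 : 0 < s := hs
      calc ENNReal.ofReal (s ^ (-θ)) * KfunE ι s w
          ≤ ENNReal.ofReal (s ^ (-θ)) * (ENNReal.ofReal s * B) :=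
            mul_le_mul_right (h1 s ⟨hs0, hst⟩) _
        _ = ENNReal.ofReal (s ^ (-θ + 1)) * B := by rw [← mul_assoc, ofReal_rpow_mul_self hs0]
        _ ≤ ENNReal.ofReal (t ^ (1-θ)) * B := by
            refine mul_le_mul_left (ENNReal.ofReal_le_ofReal ?_) _
            rw [show -θ + 1 = 1 - θ by ring]
            exact Real.rpow_le_rpow hs0.le hst (by linarith)
        _ ≤ ENNReal.ofReal ((1-θ)⁻¹ + 1) * (ENNReal.ofReal (t ^ (1-θ)) * B) :=
            le_mul_of_one_le_left zero_le hone1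
        _ ≤ _ := le_add_right (le_add_right le_rfl)
    · -- large s : use h2
      have hs0 : 0 < s := hs
      rw [add_assoc]
      refine le_add_left ?_
      calc ENNReal.ofReal (s ^ (-θ)) * KfunE ι s w
          ≤ ENNReal.ofReal (s ^ (-θ)) * (KfunE ι s u + E) := mul_le_mul_right (h2 s hst) _
        _ = ENNReal.ofReal (s ^ (-θ)) * E + ENNReal.ofReal (s ^ (-θ)) * KfunE ι s u := by
            rw [mul_add]; ring
        _ ≤ ENNReal.ofReal (t ^ (-θ)) * E
            + (⨆ r ∈ Set.Ioi t, ENNReal.ofReal (r ^ (-θ)) * KfunE ι r u) := by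
            refine add_le_add ?_ ?_
            · exact mul_le_mul_left
                (ENNReal.ofReal_le_ofReal (rpow_anti ht hst.le (by linarith))) _
            · exact le_biSup (f := fun r : ℝ => ENNReal.ofReal (r ^ (-θ)) * KfunE ι r u) hst
        _ ≤ 2 * ENNReal.ofReal (θ⁻¹ + 1) * (ENNReal.ofReal (t ^ (-θ)) * E)
            + 2 * (⨆ r ∈ Set.Ioi t, ENNReal.ofReal (r ^ (-θ)) * KfunE ι r u) := by
            exact add_le_add (le_mul_of_one_le_left zero_le hone2)
              (le_mul_of_one_le_left zero_le one_le_two)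
  · -- finite p
    set p' := p.toReal with hp'def
    have hp'1 : 1 ≤ p' := by
      rw [hp'def, ← ENNReal.toReal_one]
      exact ENNReal.toReal_mono hptop hp
    have hp'0 : 0 < p' := lt_of_lt_of_le one_pos hp'1
    have h2top : ((2:ℝ≥0∞) ^ (p' - 1)) ≠ ⊤ :=
      ENNReal.rpow_ne_top_of_nonneg (by linarith) (by norm_num)
    set g₁ : ℝ → ℝ≥0∞ := fun s => ENNReal.ofReal s⁻¹
      * (ENNReal.ofReal (s ^ (-θ)) * KfunE ι s u) ^ p' with hg₁
    have hg₁m : Measurable g₁ := by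
      refine (ENNReal.measurable_ofReal.comp measurable_inv).mul (Measurable.pow_const ?_ _)
      exact (ENNReal.measurable_ofReal.comp (measurable_id.pow_const _)).mul
        (KfunE_measurable ι u)
    set g₂ : ℝ → ℝ≥0∞ := fun s => ENNReal.ofReal (s ^ (-θ * p' - 1)) * E ^ p' with hg₂
    -- bound on (0, t]
    have hI₁ : (∫⁻ s in Set.Ioc (0:ℝ) t,
          ENNReal.ofReal s⁻¹ * (ENNReal.ofReal (s ^ (-θ)) * KfunE ι s w) ^ p')
        ≤ ENNReal.ofReal (t ^ ((1-θ) * p') / ((1-θ) * p')) * B ^ p' := by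
      calc (∫⁻ s in Set.Ioc (0:ℝ) t,
            ENNReal.ofReal s⁻¹ * (ENNReal.ofReal (s ^ (-θ)) * KfunE ι s w) ^ p')
          ≤ ∫⁻ s in Set.Ioc (0:ℝ) t, ENNReal.ofReal (s ^ ((1-θ) * p' - 1)) * B ^ p' := by
            refine setLIntegral_mono' measurableSet_Ioc fun s hs => ?_
            have hs0 : 0 < s := hs.1
            calc ENNReal.ofReal s⁻¹ * (ENNReal.ofReal (s ^ (-θ)) * KfunE ι s w) ^ p'
                ≤ ENNReal.ofReal s⁻¹
                  * (ENNReal.ofReal (s ^ (-θ)) * (ENNReal.ofReal s * B)) ^ p' := by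
                  exact mul_le_mul_right (ENNReal.rpow_le_rpow
                    (mul_le_mul_right (h1 s hs) _) hp'0.le) _
              _ = ENNReal.ofReal s⁻¹ * (ENNReal.ofReal (s ^ (-θ + 1)) * B) ^ p' := by
                  rw [← mul_assoc, ofReal_rpow_mul_self hs0]
              _ = ENNReal.ofReal (s ^ ((-θ + 1) * p' - 1)) * B ^ p' := lint_weight hp'0 hs0 B _
              _ = ENNReal.ofReal (s ^ ((1-θ) * p' - 1)) * B ^ p' := by ring_nf
        _ = (∫⁻ s in Set.Ioc (0:ℝ) t, ENNReal.ofReal (s ^ ((1-θ) * p' - 1))) * B ^ p' :=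
            lintegral_mul_const' _ _ (ENNReal.rpow_ne_top_of_nonneg hp'0.le hB)
        _ = ENNReal.ofReal (t ^ ((1-θ) * p') / ((1-θ) * p')) * B ^ p' := by
            rw [lint_Ioc (mul_pos (by linarith) hp'0) ht]
    -- bound on (t, ∞)
    have hI₂ : (∫⁻ s in Set.Ioi t,
          ENNReal.ofReal s⁻¹ * (ENNReal.ofReal (s ^ (-θ)) * KfunE ι s w) ^ p')
        ≤ (2:ℝ≥0∞) ^ (p' - 1)
          * ((∫⁻ s in Set.Ioi t, g₁ s)
            + ENNReal.ofReal (t ^ (-(θ * p')) / (θ * p')) * E ^ p') := by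
      have hpt : ∀ s ∈ Set.Ioi t, ENNReal.ofReal s⁻¹
            * (ENNReal.ofReal (s ^ (-θ)) * KfunE ι s w) ^ p'
          ≤ (2:ℝ≥0∞) ^ (p' - 1) * (g₁ s + g₂ s) := by
        intro s hs
        have hs0 : 0 < s := ht.trans hs
        calc ENNReal.ofReal s⁻¹ * (ENNReal.ofReal (s ^ (-θ)) * KfunE ι s w) ^ p'
            ≤ ENNReal.ofReal s⁻¹
              * (ENNReal.ofReal (s ^ (-θ)) * KfunE ι s u
                + ENNReal.ofReal (s ^ (-θ)) * E) ^ p' := by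
              refine mul_le_mul_right (ENNReal.rpow_le_rpow ?_ hp'0.le) _
              rw [← mul_add]
              exact mul_le_mul_right (h2 s hs) _
          _ ≤ ENNReal.ofReal s⁻¹ * ((2:ℝ≥0∞) ^ (p' - 1)
              * ((ENNReal.ofReal (s ^ (-θ)) * KfunE ι s u) ^ p'
                + (ENNReal.ofReal (s ^ (-θ)) * E) ^ p')) :=
              mul_le_mul_right (ENNReal.rpow_add_le_mul_rpow_add_rpow _ _ hp'1) _
          _ = (2:ℝ≥0∞) ^ (p' - 1) * (g₁ s
              + ENNReal.ofReal s⁻¹ * (ENNReal.ofReal (s ^ (-θ)) * E) ^ p') := by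
              rw [hg₁]; ring
          _ = (2:ℝ≥0∞) ^ (p' - 1) * (g₁ s + g₂ s) := by
              rw [hg₂, lint_weight hp'0 hs0 E (-θ)]
      calc (∫⁻ s in Set.Ioi t,
            ENNReal.ofReal s⁻¹ * (ENNReal.ofReal (s ^ (-θ)) * KfunE ι s w) ^ p')
          ≤ ∫⁻ s in Set.Ioi t, (2:ℝ≥0∞) ^ (p' - 1) * (g₁ s + g₂ s) :=
            setLIntegral_mono' measurableSet_Ioi hpt
        _ = (2:ℝ≥0∞) ^ (p' - 1) * ∫⁻ s in Set.Ioi t, (g₁ s + g₂ s) :=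
            lintegral_const_mul' _ _ h2top
        _ = (2:ℝ≥0∞) ^ (p' - 1) * ((∫⁻ s in Set.Ioi t, g₁ s) + ∫⁻ s in Set.Ioi t, g₂ s) := by
            rw [lintegral_add_left hg₁m]
        _ = (2:ℝ≥0∞) ^ (p' - 1)
            * ((∫⁻ s in Set.Ioi t, g₁ s)
              + ENNReal.ofReal (t ^ (-(θ * p')) / (θ * p')) * E ^ p') := by
            congr 1
            rw [hg₂]
            congr 1
            rw [lintegral_mul_const' _ _ (ENNReal.rpow_ne_top_of_nonneg hp'0.le hE)]
            congr 1
            rw [show -θ * p' - 1 = -(θ * p') - 1 by ring]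
            exact lint_Ioi (mul_pos hθ0 hp'0) ht
    -- combine
    rw [interpNormE, if_neg hptop, ← hp'def]
    have hsplit : (∫⁻ s in Set.Ioi (0:ℝ),
          ENNReal.ofReal s⁻¹ * (ENNReal.ofReal (s ^ (-θ)) * KfunE ι s w) ^ p')
        ≤ ENNReal.ofReal (t ^ ((1-θ) * p') / ((1-θ) * p')) * B ^ p'
          + ((2:ℝ≥0∞) ^ (p' - 1) * (∫⁻ s in Set.Ioi t, g₁ s)
            + (2:ℝ≥0∞) ^ (p' - 1) * (ENNReal.ofReal (t ^ (-(θ * p')) / (θ * p')) * E ^ p')) := by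
      rw [← Set.Ioc_union_Ioi_eq_Ioi ht.le]
      refine (lintegral_union_le _ _ _).trans ?_
      rw [← mul_add]
      exact add_le_add hI₁ hI₂
    have hr0 : (0:ℝ) ≤ p'⁻¹ := inv_nonneg.mpr hp'0.le
    have hr1 : p'⁻¹ ≤ 1 := inv_le_one_of_one_le₀ hp'1
    calc (∫⁻ s in Set.Ioi (0:ℝ),
          ENNReal.ofReal s⁻¹ * (ENNReal.ofReal (s ^ (-θ)) * KfunE ι s w) ^ p') ^ p'⁻¹
        ≤ (ENNReal.ofReal (t ^ ((1-θ) * p') / ((1-θ) * p')) * B ^ p'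
          + ((2:ℝ≥0∞) ^ (p' - 1) * (∫⁻ s in Set.Ioi t, g₁ s)
            + (2:ℝ≥0∞) ^ (p' - 1) * (ENNReal.ofReal (t ^ (-(θ * p')) / (θ * p')) * E ^ p'))) ^ p'⁻¹ :=
          ENNReal.rpow_le_rpow hsplit hr0
      _ ≤ (ENNReal.ofReal (t ^ ((1-θ) * p') / ((1-θ) * p')) * B ^ p') ^ p'⁻¹
          + (((2:ℝ≥0∞) ^ (p' - 1) * (∫⁻ s in Set.Ioi t, g₁ s)) ^ p'⁻¹
            + ((2:ℝ≥0∞) ^ (p' - 1) * (ENNReal.ofReal (t ^ (-(θ * p')) / (θ * p')) * E ^ p')) ^ p'⁻¹) :=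
          le_trans (ENNReal.rpow_add_le_add_rpow _ _ hr0 hr1)
            (add_le_add le_rfl (ENNReal.rpow_add_le_add_rpow _ _ hr0 hr1))
      _ ≤ ENNReal.ofReal ((1-θ)⁻¹ + 1) * (ENNReal.ofReal (t ^ (1-θ)) * B)
          + (2 * TailE ι θ p t u
            + 2 * ENNReal.ofReal (θ⁻¹ + 1) * (ENNReal.ofReal (t ^ (-θ)) * E)) := by
          refine add_le_add ?_ (add_le_add ?_ ?_)
          · rw [ennreal_root_mul hp'0,
              ENNReal.ofReal_rpow_of_pos (div_pos (Real.rpow_pos_of_pos ht _)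
                (mul_pos (by linarith) hp'0))]
            calc ENNReal.ofReal ((t ^ ((1-θ) * p') / ((1-θ) * p')) ^ p'⁻¹) * B
                ≤ ENNReal.ofReal (t ^ (1-θ) * ((1-θ)⁻¹ + 1)) * B :=
                  mul_le_mul_left (ENNReal.ofReal_le_ofReal
                    (aux_root ht hp'1 (by linarith) (1-θ))) _
              _ = ENNReal.ofReal ((1-θ)⁻¹ + 1) * (ENNReal.ofReal (t ^ (1-θ)) * B) := by
                  rw [ENNReal.ofReal_mul (Real.rpow_nonneg ht.le _)]
                  ring
          · rw [ENNReal.mul_rpow_of_nonneg _ _ hr0, ← ENNReal.rpow_mul]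
            rw [TailE, if_neg hptop, ← hp'def]
            refine mul_le_mul ?_ le_rfl zero_le (by norm_num)
            calc (2:ℝ≥0∞) ^ ((p' - 1) * p'⁻¹) ≤ (2:ℝ≥0∞) ^ (1:ℝ) :=
                ENNReal.rpow_le_rpow_of_exponent_le one_le_two (by
                  rw [sub_mul, mul_inv_cancel₀ hp'0.ne']
                  have : 0 ≤ 1 * p'⁻¹ := by positivity
                  linarith)
              _ = 2 := ENNReal.rpow_one 2
          · rw [ENNReal.mul_rpow_of_nonneg _ _ hr0, ← ENNReal.rpow_mul,
              ennreal_root_mul hp'0]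
            have e2 : (2:ℝ≥0∞) ^ ((p' - 1) * p'⁻¹) ≤ 2 := by
              calc (2:ℝ≥0∞) ^ ((p' - 1) * p'⁻¹) ≤ (2:ℝ≥0∞) ^ (1:ℝ) :=
                  ENNReal.rpow_le_rpow_of_exponent_le one_le_two (by
                    rw [sub_mul, mul_inv_cancel₀ hp'0.ne']
                    have : 0 ≤ 1 * p'⁻¹ := by positivity
                    linarith)
                _ = 2 := ENNReal.rpow_one 2
            have e3 : (ENNReal.ofReal (t ^ (-(θ * p')) / (θ * p'))) ^ p'⁻¹
                ≤ ENNReal.ofReal (t ^ (-θ) * (θ⁻¹ + 1)) := by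
              rw [ENNReal.ofReal_rpow_of_pos (div_pos (Real.rpow_pos_of_pos ht _)
                (mul_pos hθ0 hp'0))]
              refine ENNReal.ofReal_le_ofReal ?_
              have := aux_root ht hp'1 hθ0 (-θ)
              rwa [show -θ * p' = -(θ * p') by ring] at this
            calc (2:ℝ≥0∞) ^ ((p' - 1) * p'⁻¹)
                  * ((ENNReal.ofReal (t ^ (-(θ * p')) / (θ * p'))) ^ p'⁻¹ * E)
                ≤ 2 * (ENNReal.ofReal (t ^ (-θ) * (θ⁻¹ + 1)) * E) :=
                  mul_le_mul e2 (mul_le_mul_left e3 _) zero_le (by norm_num)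
              _ = 2 * ENNReal.ofReal (θ⁻¹ + 1) * (ENNReal.ofReal (t ^ (-θ)) * E) := by
                  rw [ENNReal.ofReal_mul (Real.rpow_nonneg ht.le _)]
                  ring
      _ = _ := by ring

end LemmaA

/-! ### Bound for a single interpolated operator -/

section Sj
variable {X₀ X₁ Y₀ Y₁ : Type*}
    [NormedAddCommGroup X₀] [NormedSpace ℝ X₀] [NormedAddCommGroup X₁] [NormedSpace ℝ X₁]
    [NormedAddCommGroup Y₀] [NormedSpace ℝ Y₀] [NormedAddCommGroup Y₁] [NormedSpace ℝ Y₁]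
    (ιX : X₁ →L[ℝ] X₀) (ιY : Y₁ →L[ℝ] Y₀)

lemma Sj_bound {θ₁ θj : ℝ} (hθj0 : 0 < θj) (hθj1 : θj < 1) (hle : θ₁ ≤ θj)
    {pj qj : ℝ≥0∞} (hpj : 1 ≤ pj) (hqj : 1 ≤ qj)
    (Sj : X₀ →ₗ[ℝ] Y₀) (cj : ℝ≥0)
    (hcj : ∀ u : X₀, interpNormE ιY θj qj (Sj u) ≤ (cj:ℝ≥0∞) * interpNormE ιX θj pj u)
    {t : ℝ} (ht : 0 < t) (u : X₀) (v : X₁) {M : ℝ≥0∞}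
    (hTail : TailE ιX θj pj t u
      ≤ ENNReal.ofReal (t ^ (θ₁ - θj)) * (ENNReal.ofReal (4 * ((θj - θ₁)⁻¹ + 1)) * M)) :
    KfunE ιY t (Sj (ιX v)) ≤
      (cj:ℝ≥0∞) * ENNReal.ofReal (8 * ((1-θj)⁻¹ + θj⁻¹ + 2))
        * (ENNReal.ofReal ‖u - ιX v‖ + ENNReal.ofReal t * ENNReal.ofReal ‖v‖)
      + (cj:ℝ≥0∞) * ENNReal.ofReal (32 * ((θj - θ₁)⁻¹ + 1)) * (ENNReal.ofReal (t ^ θ₁) * M) := by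
  have hi1 : (0:ℝ) ≤ (1-θj)⁻¹ := inv_nonneg.mpr (by linarith)
  have hi2 : (0:ℝ) ≤ θj⁻¹ := inv_nonneg.mpr hθj0.le
  have hi3 : (0:ℝ) ≤ (θj - θ₁)⁻¹ + 1 := by
    have : 0 ≤ (θj - θ₁)⁻¹ := inv_nonneg.mpr (by linarith)
    linarith
  set A1 : ℝ≥0∞ := ENNReal.ofReal ((1-θj)⁻¹ + 1)
    * (ENNReal.ofReal (t ^ (1-θj)) * ENNReal.ofReal ‖v‖) with hA1
  set A2 : ℝ≥0∞ := 2 * ENNReal.ofReal (θj⁻¹ + 1)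
    * (ENNReal.ofReal (t ^ (-θj)) * ENNReal.ofReal ‖u - ιX v‖) with hA2
  set A3 : ℝ≥0∞ := 2 * TailE ιX θj pj t u with hA3
  have h₂ : interpNormE ιX θj pj (ιX v) ≤ A1 + A2 + A3 := by
    refine interp_le_of_decomp ιX hθj0 hθj1 hpj ht (ιX v) u
      ENNReal.ofReal_ne_top ENNReal.ofReal_ne_top ?_ ?_
    · exact fun s _ => KfunE_le_emb ιX s v
    · exact fun s _ => KfunE_le_of_sub ιX t s u v
  have h₁ : KfunE ιY t (Sj (ιX v))
      ≤ ENNReal.ofReal (t ^ θj) * (4 * ((cj:ℝ≥0∞) * (A1 + A2 + A3))) := by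
    have ha : ENNReal.ofReal (t ^ (-θj)) * KfunE ιY t (Sj (ιX v))
        ≤ interpNormE ιY θj ⊤ (Sj (ιX v)) := by
      rw [interpNormE, if_pos rfl]
      exact le_biSup (f := fun r : ℝ => ENNReal.ofReal (r ^ (-θj)) * KfunE ιY r (Sj (ιX v)))
        (show t ∈ Set.Ioi (0:ℝ) from ht)
    calc KfunE ιY t (Sj (ιX v))
        = ENNReal.ofReal (t ^ θj) * (ENNReal.ofReal (t ^ (-θj)) * KfunE ιY t (Sj (ιX v))) := by
          rw [← mul_assoc, ofReal_rpow_mul_rpow ht, add_neg_cancel, Real.rpow_zero,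
            ENNReal.ofReal_one, one_mul]
      _ ≤ ENNReal.ofReal (t ^ θj) * interpNormE ιY θj ⊤ (Sj (ιX v)) := mul_le_mul_right ha _
      _ ≤ ENNReal.ofReal (t ^ θj) * (4 * interpNormE ιY θj qj (Sj (ιX v))) :=
          mul_le_mul_right (interp_top_le ιY hθj0.le hθj1.le hqj _) _
      _ ≤ ENNReal.ofReal (t ^ θj) * (4 * ((cj:ℝ≥0∞) * interpNormE ιX θj pj (ιX v))) :=
          mul_le_mul_right (mul_le_mul_right (hcj _) _) _
      _ ≤ _ := mul_le_mul_right (mul_le_mul_right (mul_le_mul_right h₂ _) _) _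
  refine h₁.trans ?_
  have expand : ENNReal.ofReal (t ^ θj) * (4 * ((cj:ℝ≥0∞) * (A1 + A2 + A3)))
      = (cj:ℝ≥0∞) * ((4 * ENNReal.ofReal (t ^ θj)) * A1)
        + (cj:ℝ≥0∞) * ((4 * ENNReal.ofReal (t ^ θj)) * A2)
        + (cj:ℝ≥0∞) * ((4 * ENNReal.ofReal (t ^ θj)) * A3) := by ring
  rw [expand]
  have claim1 : (4 * ENNReal.ofReal (t ^ θj)) * A1
      ≤ ENNReal.ofReal (8 * ((1-θj)⁻¹ + θj⁻¹ + 2)) * (ENNReal.ofReal t * ENNReal.ofReal ‖v‖) := by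
    rw [hA1]
    calc (4 * ENNReal.ofReal (t ^ θj))
          * (ENNReal.ofReal ((1-θj)⁻¹ + 1) * (ENNReal.ofReal (t ^ (1-θj)) * ENNReal.ofReal ‖v‖))
        = (4 * ENNReal.ofReal ((1-θj)⁻¹ + 1))
          * ((ENNReal.ofReal (t ^ θj) * ENNReal.ofReal (t ^ (1-θj))) * ENNReal.ofReal ‖v‖) := by
          ring
      _ = (4 * ENNReal.ofReal ((1-θj)⁻¹ + 1)) * (ENNReal.ofReal t * ENNReal.ofReal ‖v‖) := by
          rw [ofReal_rpow_mul_rpow ht, show θj + (1-θj) = 1 by ring, Real.rpow_one]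
      _ ≤ _ := by
          refine mul_le_mul_left ?_ _
          rw [show (4:ℝ≥0∞) = ENNReal.ofReal 4 by simp, ← ENNReal.ofReal_mul (by norm_num)]
          exact ENNReal.ofReal_le_ofReal (by nlinarith)
  have claim2 : (4 * ENNReal.ofReal (t ^ θj)) * A2
      ≤ ENNReal.ofReal (8 * ((1-θj)⁻¹ + θj⁻¹ + 2)) * ENNReal.ofReal ‖u - ιX v‖ := by
    rw [hA2]
    calc (4 * ENNReal.ofReal (t ^ θj)) * (2 * ENNReal.ofReal (θj⁻¹ + 1)
          * (ENNReal.ofReal (t ^ (-θj)) * ENNReal.ofReal ‖u - ιX v‖))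
        = (4 * 2 * ENNReal.ofReal (θj⁻¹ + 1))
          * ((ENNReal.ofReal (t ^ θj) * ENNReal.ofReal (t ^ (-θj))) * ENNReal.ofReal ‖u - ιX v‖) := by
          ring
      _ = (8 * ENNReal.ofReal (θj⁻¹ + 1)) * ENNReal.ofReal ‖u - ιX v‖ := by
          rw [ofReal_rpow_mul_rpow ht, add_neg_cancel, Real.rpow_zero, ENNReal.ofReal_one]
          norm_num
      _ ≤ _ := by
          refine mul_le_mul_left ?_ _
          rw [show (8:ℝ≥0∞) = ENNReal.ofReal 8 by simp, ← ENNReal.ofReal_mul (by norm_num)]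
          exact ENNReal.ofReal_le_ofReal (by nlinarith)
  have claim3 : (4 * ENNReal.ofReal (t ^ θj)) * A3
      ≤ ENNReal.ofReal (32 * ((θj - θ₁)⁻¹ + 1)) * (ENNReal.ofReal (t ^ θ₁) * M) := by
    rw [hA3]
    calc (4 * ENNReal.ofReal (t ^ θj)) * (2 * TailE ιX θj pj t u)
        = (8 * ENNReal.ofReal (t ^ θj)) * TailE ιX θj pj t u := by ring
      _ ≤ (8 * ENNReal.ofReal (t ^ θj))
          * (ENNReal.ofReal (t ^ (θ₁ - θj)) * (ENNReal.ofReal (4 * ((θj - θ₁)⁻¹ + 1)) * M)) :=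
          mul_le_mul_right hTail _
      _ = (8 * ENNReal.ofReal (4 * ((θj - θ₁)⁻¹ + 1)))
          * ((ENNReal.ofReal (t ^ θj) * ENNReal.ofReal (t ^ (θ₁ - θj))) * M) := by ring
      _ = (8 * ENNReal.ofReal (4 * ((θj - θ₁)⁻¹ + 1))) * (ENNReal.ofReal (t ^ θ₁) * M) := by
          rw [ofReal_rpow_mul_rpow ht, show θj + (θ₁ - θj) = θ₁ by ring]
      _ ≤ _ := by
          refine mul_le_mul_left ?_ _
          rw [show (8:ℝ≥0∞) = ENNReal.ofReal 8 by simp, ← ENNReal.ofReal_mul (by norm_num)]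
          exact ENNReal.ofReal_le_ofReal (by nlinarith)
  calc (cj:ℝ≥0∞) * ((4 * ENNReal.ofReal (t ^ θj)) * A1)
        + (cj:ℝ≥0∞) * ((4 * ENNReal.ofReal (t ^ θj)) * A2)
        + (cj:ℝ≥0∞) * ((4 * ENNReal.ofReal (t ^ θj)) * A3)
      ≤ (cj:ℝ≥0∞) * (ENNReal.ofReal (8 * ((1-θj)⁻¹ + θj⁻¹ + 2))
            * (ENNReal.ofReal t * ENNReal.ofReal ‖v‖))
        + (cj:ℝ≥0∞) * (ENNReal.ofReal (8 * ((1-θj)⁻¹ + θj⁻¹ + 2)) * ENNReal.ofReal ‖u - ιX v‖)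
        + (cj:ℝ≥0∞) * (ENNReal.ofReal (32 * ((θj - θ₁)⁻¹ + 1)) * (ENNReal.ofReal (t ^ θ₁) * M)) := by
        exact add_le_add (add_le_add (mul_le_mul_right claim1 _) (mul_le_mul_right claim2 _))
          (mul_le_mul_right claim3 _)
    _ = _ := by ring

end Sj

/-- **Abstract interpolation lemma** (Lemma 2.7).
Let `X₁ ⊂ X₀` and `Y₁ ⊂ Y₀` be Banach spaces with continuous embeddings, let
`0 < θ₁ < … < θ_J < 1`, `p_j, q_j ∈ [1,∞]`, and let `T̃ : X₀ → Y₀`, `S₁ : X₁ → Y₁`,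
`S_{θ_j} : X_{θ_j,p_j} → Y_{θ_j,q_j}` be bounded linear maps with
`T̃ f = S₁ f + ∑_j S_{θ_j} f` for all `f ∈ X₁`. Then
`T̃ : (X₀,X₁)_{θ₁,p₁} → (Y₀,Y₁)_{θ₁,∞}` is bounded. -/
theorem abstract_interpolation_lemma
    {X₀ X₁ Y₀ Y₁ : Type*}
    [NormedAddCommGroup X₀] [NormedSpace ℝ X₀] [CompleteSpace X₀]
    [NormedAddCommGroup X₁] [NormedSpace ℝ X₁] [CompleteSpace X₁]
    [NormedAddCommGroup Y₀] [NormedSpace ℝ Y₀] [CompleteSpace Y₀]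
    [NormedAddCommGroup Y₁] [NormedSpace ℝ Y₁] [CompleteSpace Y₁]
    (ιX : X₁ →L[ℝ] X₀) (hιX : Function.Injective ιX)
    (ιY : Y₁ →L[ℝ] Y₀) (hιY : Function.Injective ιY)
    (J : ℕ) (hJ : 0 < J)
    (θ : Fin J → ℝ) (p q : Fin J → ℝ≥0∞)
    (hθmono : StrictMono θ) (hθ : ∀ j, 0 < θ j ∧ θ j < 1)
    (hp : ∀ j, 1 ≤ p j) (hq : ∀ j, 1 ≤ q j)
    (T : X₀ →L[ℝ] Y₀) (S1 : X₁ →L[ℝ] Y₁) (S : Fin J → (X₀ →ₗ[ℝ] Y₀))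
    (hS : ∀ j, ∃ c : ℝ≥0, ∀ u : X₀,
      interpNormE ιY (θ j) (q j) (S j u) ≤ (c : ℝ≥0∞) * interpNormE ιX (θ j) (p j) u)
    (hdecomp : ∀ f : X₁, T (ιX f) = ιY (S1 f) + ∑ j : Fin J, S j (ιX f)) :
    ∃ C : ℝ≥0, 0 < C ∧ ∀ u : X₀,
      interpNormE ιY (θ ⟨0, hJ⟩) ⊤ (T u) ≤
        (C : ℝ≥0∞) * interpNormE ιX (θ ⟨0, hJ⟩) (p ⟨0, hJ⟩) u := by
  classical
  haveI : Nonempty X₁ := ⟨0⟩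
  set j₀ : Fin J := ⟨0, hJ⟩ with hj₀def
  obtain ⟨hθ₁0, hθ₁1⟩ := hθ j₀
  choose c hc using hS
  set Dco : Fin J → ℝ≥0∞ :=
    fun j => (c j : ℝ≥0∞) * ENNReal.ofReal (8 * ((1 - θ j)⁻¹ + (θ j)⁻¹ + 2)) with hDco
  set Gco : Fin J → ℝ≥0∞ :=
    fun j => (c j : ℝ≥0∞) * ENNReal.ofReal (32 * ((θ j - θ j₀)⁻¹ + 1)) with hGco
  set E₀ : ℝ≥0∞ := ENNReal.ofReal ‖T‖ + ENNReal.ofReal ‖S1‖ + ∑ j, Dco j with hE₀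
  set G₀ : ℝ≥0∞ := ∑ j, Gco j with hG₀
  have hE₀top : E₀ ≠ ⊤ := by
    rw [hE₀]
    refine ENNReal.add_ne_top.mpr ⟨ENNReal.add_ne_top.mpr ⟨ENNReal.ofReal_ne_top,
      ENNReal.ofReal_ne_top⟩, ?_⟩
    rw [ENNReal.sum_ne_top]
    exact fun j _ => ENNReal.mul_ne_top ENNReal.coe_ne_top ENNReal.ofReal_ne_top
  have hG₀top : G₀ ≠ ⊤ := by
    rw [hG₀, ENNReal.sum_ne_top]
    exact fun j _ => ENNReal.mul_ne_top ENNReal.coe_ne_top ENNReal.ofReal_ne_top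
  set Ctot : ℝ≥0∞ := 4 * E₀ + G₀ with hCtotdef
  have hCtot : Ctot ≠ ⊤ := by
    rw [hCtotdef]
    exact ENNReal.add_ne_top.mpr ⟨ENNReal.mul_ne_top (by norm_num) hE₀top, hG₀top⟩
  refine ⟨Ctot.toNNReal + 1, by positivity, fun u => ?_⟩
  set M : ℝ≥0∞ := interpNormE ιX (θ j₀) (p j₀) u with hMdef
  by_cases hMtop : M = ⊤
  · rw [hMtop, ENNReal.mul_top (by positivity)]
    exact le_top
  have h4M : (4:ℝ≥0∞) * M ≠ ⊤ := ENNReal.mul_ne_top (by norm_num) hMtop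
  have hN : ∀ s : ℝ, 0 < s →
      ENNReal.ofReal (s ^ (-θ j₀)) * KfunE ιX s u ≤ 4 * M :=
    fun s hs => pointwise_le_interp ιX hθ₁0.le hθ₁1.le (hp j₀) hs u
  rw [interpNormE, if_pos rfl]
  refine iSup₂_le fun t ht => ?_
  have hone : ENNReal.ofReal (t ^ (-θ j₀)) * ENNReal.ofReal (t ^ (θ j₀)) = 1 := by
    rw [ofReal_rpow_mul_rpow ht, neg_add_cancel, Real.rpow_zero, ENNReal.ofReal_one]
  -- tail estimates
  have hTail : ∀ j, TailE ιX (θ j) (p j) t u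
      ≤ ENNReal.ofReal (t ^ (θ j₀ - θ j))
        * (ENNReal.ofReal (4 * ((θ j - θ j₀)⁻¹ + 1)) * M) := by
    intro j
    by_cases hj : j = j₀
    · subst hj
      rw [sub_self, Real.rpow_zero, ENNReal.ofReal_one, one_mul, inv_zero]
      refine (tailE_le_interp ιX _ _ ht u).trans ?_
      exact le_mul_of_one_le_left zero_le (ENNReal.one_le_ofReal.mpr (by norm_num))
    · have hle : j₀ ≤ j := by
        simp only [hj₀def, Fin.le_def]
        exact Nat.zero_le _
      have hlt : θ j₀ < θ j := hθmono (hle.lt_of_ne (Ne.symm hj))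
      refine (tailE_le_of_unif ιX hlt (hp j) ht u (4*M) h4M hN).trans (le_of_eq ?_)
      have hb : (0:ℝ) ≤ (θ j - θ j₀)⁻¹ + 1 := by
        have : (0:ℝ) ≤ (θ j - θ j₀)⁻¹ := inv_nonneg.mpr (by linarith)
        linarith
      rw [ENNReal.ofReal_mul (Real.rpow_nonneg ht.le _),
        show ENNReal.ofReal (4 * ((θ j - θ j₀)⁻¹ + 1))
          = ENNReal.ofReal 4 * ENNReal.ofReal ((θ j - θ j₀)⁻¹ + 1) by
            rw [← ENNReal.ofReal_mul (by norm_num)],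
        show (4:ℝ≥0∞) = ENNReal.ofReal 4 by simp]
      ring
  -- bound for each v
  have final : ∀ v : X₁,
      ENNReal.ofReal (t ^ (-θ j₀)) * KfunE ιY t (T u)
      ≤ (E₀ * ENNReal.ofReal (t ^ (-θ j₀)))
          * (ENNReal.ofReal ‖u - ιX v‖ + ENNReal.ofReal t * ENNReal.ofReal ‖v‖)
        + G₀ * M := by
    intro v
    set δ : ℝ≥0∞ := ENNReal.ofReal ‖u - ιX v‖ + ENNReal.ofReal t * ENNReal.ofReal ‖v‖ with hδ
    have hKj : ∀ j, KfunE ιY t (S j (ιX v)) ≤ Dco j * δ + Gco j * (ENNReal.ofReal (t ^ (θ j₀)) * M) := by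
      intro j
      have hle : j₀ ≤ j := by
        simp only [hj₀def, Fin.le_def]
        exact Nat.zero_le _
      exact Sj_bound ιX ιY (hθ j).1 (hθ j).2 (hθmono.monotone hle) (hp j) (hq j)
        (S j) (c j) (hc j) ht u v (hTail j)
    have hb3 : KfunE ιY t (∑ j, S j (ιX v))
        ≤ (∑ j, Dco j) * δ + G₀ * (ENNReal.ofReal (t ^ (θ j₀)) * M) := by
      refine (KfunE_sum_le ιY t _).trans ?_
      refine (Finset.sum_le_sum fun j _ => hKj j).trans (le_of_eq ?_)
      rw [Finset.sum_add_distrib, ← Finset.sum_mul, ← Finset.sum_mul, hG₀]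
    have hb1 : KfunE ιY t (T (u - ιX v)) ≤ ENNReal.ofReal ‖T‖ * ENNReal.ofReal ‖u - ιX v‖ := by
      refine (KfunE_le_norm ιY t _).trans ?_
      rw [← ENNReal.ofReal_mul (norm_nonneg _)]
      exact ENNReal.ofReal_le_ofReal (T.le_opNorm _)
    have hb2 : KfunE ιY t (ιY (S1 v))
        ≤ ENNReal.ofReal ‖S1‖ * (ENNReal.ofReal t * ENNReal.ofReal ‖v‖) := by
      refine (KfunE_le_emb ιY t _).trans ?_
      rw [show ENNReal.ofReal ‖S1‖ * (ENNReal.ofReal t * ENNReal.ofReal ‖v‖)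
          = ENNReal.ofReal t * (ENNReal.ofReal ‖S1‖ * ENNReal.ofReal ‖v‖) by ring]
      refine mul_le_mul_right ?_ _
      rw [← ENNReal.ofReal_mul (norm_nonneg _)]
      exact ENNReal.ofReal_le_ofReal (S1.le_opNorm _)
    have hTu : T u = T (u - ιX v) + (ιY (S1 v) + ∑ j, S j (ιX v)) := by
      rw [← hdecomp v, ← map_add]
      congr 1
      abel
    have hKT : KfunE ιY t (T u) ≤ E₀ * δ + G₀ * (ENNReal.ofReal (t ^ (θ j₀)) * M) := by
      rw [hTu]
      refine (KfunE_add_le ιY t _ _).trans ?_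
      refine (add_le_add hb1 ((KfunE_add_le ιY t _ _).trans (add_le_add hb2 hb3))).trans ?_
      have h1δ : ENNReal.ofReal ‖T‖ * ENNReal.ofReal ‖u - ιX v‖ ≤ ENNReal.ofReal ‖T‖ * δ :=
        mul_le_mul_right le_self_add _
      have h2δ : ENNReal.ofReal ‖S1‖ * (ENNReal.ofReal t * ENNReal.ofReal ‖v‖)
          ≤ ENNReal.ofReal ‖S1‖ * δ := mul_le_mul_right le_add_self _
      calc ENNReal.ofReal ‖T‖ * ENNReal.ofReal ‖u - ιX v‖
            + (ENNReal.ofReal ‖S1‖ * (ENNReal.ofReal t * ENNReal.ofReal ‖v‖)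
              + ((∑ j, Dco j) * δ + G₀ * (ENNReal.ofReal (t ^ (θ j₀)) * M)))
          ≤ ENNReal.ofReal ‖T‖ * δ + (ENNReal.ofReal ‖S1‖ * δ
              + ((∑ j, Dco j) * δ + G₀ * (ENNReal.ofReal (t ^ (θ j₀)) * M))) :=
            add_le_add h1δ (add_le_add h2δ le_rfl)
        _ = E₀ * δ + G₀ * (ENNReal.ofReal (t ^ (θ j₀)) * M) := by rw [hE₀]; ring
    calc ENNReal.ofReal (t ^ (-θ j₀)) * KfunE ιY t (T u)
        ≤ ENNReal.ofReal (t ^ (-θ j₀)) * (E₀ * δ + G₀ * (ENNReal.ofReal (t ^ (θ j₀)) * M)) :=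
          mul_le_mul_right hKT _
      _ = (E₀ * ENNReal.ofReal (t ^ (-θ j₀))) * δ
          + G₀ * ((ENNReal.ofReal (t ^ (-θ j₀)) * ENNReal.ofReal (t ^ (θ j₀))) * M) := by ring
      _ = (E₀ * ENNReal.ofReal (t ^ (-θ j₀))) * δ + G₀ * M := by rw [hone, one_mul]
  -- take the infimum over v
  have hinf : ENNReal.ofReal (t ^ (-θ j₀)) * KfunE ιY t (T u)
      ≤ (E₀ * ENNReal.ofReal (t ^ (-θ j₀))) * KfunE ιX t u + G₀ * M := by
    refine (le_iInf final).trans (le_of_eq ?_)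
    have hca : E₀ * ENNReal.ofReal (t ^ (-θ j₀)) ≠ ⊤ :=
      ENNReal.mul_ne_top hE₀top ENNReal.ofReal_ne_top
    rw [KfunE]
    rw [← ENNReal.iInf_add, ← ENNReal.mul_iInf (fun h => (hca h).elim)]
  calc ENNReal.ofReal (t ^ (-θ j₀)) * KfunE ιY t (T u)
      ≤ (E₀ * ENNReal.ofReal (t ^ (-θ j₀))) * KfunE ιX t u + G₀ * M := hinf
    _ = E₀ * (ENNReal.ofReal (t ^ (-θ j₀)) * KfunE ιX t u) + G₀ * M := by ring
    _ ≤ E₀ * (4 * M) + G₀ * M := add_le_add (mul_le_mul_right (hN t ht) _) le_rfl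
    _ = Ctot * M := by rw [hCtotdef]; ring
    _ ≤ ((Ctot.toNNReal + 1 : ℝ≥0) : ℝ≥0∞) * M := by
        refine mul_le_mul_left ?_ _
        rw [ENNReal.coe_add, ENNReal.coe_toNNReal hCtot]
        exact le_self_add

end
end
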